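/- arXiv:2211.07167 — 2 statements merged into one kernel-verified Lean document; each statement's English description precedes it below -/
import Mathlib

section
/- Let f: X → X be a bi-asymptotically c-expansive continuous surjection of a compact metric space with the shadowing property, B a basic set, and p ∈ Per(f) ∩ B. If q ∈ C_p ∩ Per(f), then C_p = C_q, where C_x = closure of (W^s(x) ∩ B). -/
open Filter Topology Function

/-- A full orbit (element of the inverse limit) of `f`. -/
def FullOrbit {X : Type*} (f : X → X) (x : ℤ → X) : Prop := ∀ n : ℤ, f (x n) = x (n + 1)

/-- `f` is bi-asymptotically `c`-expansive with constant `c`. -/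
def BiAsympCExpWith {X : Type*} [MetricSpace X] (f : X → X) (c : ℝ) : Prop :=
  (∀ x y : ℤ → X, FullOrbit f x → FullOrbit f y →
      (∀ n : ℕ, dist (x n) (y n) ≤ c) →
      Tendsto (fun n : ℕ => dist (x n) (y n)) atTop (𝓝 0)) ∧
  (∀ x y : ℤ → X, FullOrbit f x → FullOrbit f y →
      (∀ n : ℕ, dist (x (-(n : ℤ))) (y (-(n : ℤ))) ≤ c) →
      Tendsto (fun n : ℕ => dist (x (-(n : ℤ))) (y (-(n : ℤ)))) atTop (𝓝 0))

/-- `f` is bi-asymptotically `c`-expansive (for some constant). -/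
def BiAsympCExpansive {X : Type*} [MetricSpace X] (f : X → X) : Prop :=
  ∃ c > 0, BiAsympCExpWith f c

/-- `f` has the shadowing property. -/
def Shadowing {X : Type*} [MetricSpace X] (f : X → X) : Prop :=
  ∀ ε > 0, ∃ δ > 0, ∀ x : ℕ → X, (∀ n : ℕ, dist (f (x n)) (x (n + 1)) ≤ δ) →
    ∃ y : X, ∀ n : ℕ, dist (f^[n] y) (x n) ≤ ε

/-- `x` is a non-wandering point of `f`. -/
def NonWandering {X : Type*} [TopologicalSpace X] (f : X → X) (x : X) : Prop :=
  ∀ U : Set X, IsOpen U → x ∈ U → ∃ n : ℕ, 0 < n ∧ (f^[n] '' U ∩ U).Nonempty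

/-- There is a finite `α`-chain from `x` to `y`. -/
def ChainRel {X : Type*} [MetricSpace X] (f : X → X) (α : ℝ) (x y : X) : Prop :=
  ∃ (n : ℕ) (z : ℕ → X), 0 < n ∧ z 0 = x ∧ z n = y ∧
    ∀ i < n, dist (f (z i)) (z (i + 1)) ≤ α

/-- `x` is a chain recurrent point of `f`. -/
def ChainRecurrent {X : Type*} [MetricSpace X] (f : X → X) (x : X) : Prop :=
  ∀ α > 0, ChainRel f α x x

/-- chain equivalence of chain recurrent points -/
def ChainEquiv {X : Type*} [MetricSpace X] (f : X → X) (x y : X) : Prop :=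
  ∀ α > 0, ChainRel f α x y ∧ ChainRel f α y x

/-- basic sets: chain equivalence classes of `CR(f)` -/
def IsBasicSet {X : Type*} [MetricSpace X] (f : X → X) (B : Set X) : Prop :=
  ∃ x : X, ChainRecurrent f x ∧ B = {y | ChainRecurrent f y ∧ ChainEquiv f x y}

/-- the stable set of `x`. -/
def Ws {X : Type*} [MetricSpace X] (f : X → X) (x : X) : Set X :=
  {y | Tendsto (fun n : ℕ => dist (f^[n] x) (f^[n] y)) atTop (𝓝 0)}

/-- the unstable set of a full orbit `x`. -/
def Wu {X : Type*} [MetricSpace X] (f : X → X) (x : ℤ → X) : Set X :=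
  {y₀ | ∃ y : ℤ → X, FullOrbit f y ∧ y 0 = y₀ ∧
    Tendsto (fun n : ℕ => dist (x (-(n : ℤ))) (y (-(n : ℤ)))) atTop (𝓝 0)}

/-- `g` restricted to `A` is topologically transitive. -/
def TopTransOn {X : Type*} [TopologicalSpace X] (g : X → X) (A : Set X) : Prop :=
  ∀ U V : Set X, IsOpen U → IsOpen V → (U ∩ A).Nonempty → (V ∩ A).Nonempty →
    ∃ n : ℕ, 0 < n ∧ (g^[n] '' (U ∩ A) ∩ (V ∩ A)).Nonempty

/-- `g` restricted to `A` is topologically mixing. -/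
def TopMixingOn {X : Type*} [TopologicalSpace X] (g : X → X) (A : Set X) : Prop :=
  ∀ U V : Set X, IsOpen U → IsOpen V → (U ∩ A).Nonempty → (V ∩ A).Nonempty →
    ∃ N : ℕ, ∀ n ≥ N, (g^[n] '' (U ∩ A) ∩ (V ∩ A)).Nonempty

/-- `g` is asymptotically expansive with constant `c`. -/
def AsympExpWith {X : Type*} [MetricSpace X] (g : X → X) (c : ℝ) : Prop :=
  ∀ x y : X, (∀ n : ℕ, dist (g^[n] x) (g^[n] y) ≤ c) →
    Tendsto (fun n : ℕ => dist (g^[n] x) (g^[n] y)) atTop (𝓝 0)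

section Aux

open Filter Topology Function

variable {X : Type*} [MetricSpace X]

/-- chain of given length -/
def ChainSeg (f : X → X) (α : ℝ) (n : ℕ) (x y : X) : Prop :=
  ∃ z : ℕ → X, z 0 = x ∧ z n = y ∧ ∀ i < n, dist (f (z i)) (z (i + 1)) ≤ α

lemma ChainSeg.mono {f : X → X} {α α' : ℝ} {n : ℕ} {x y : X}
    (h : ChainSeg f α n x y) (hle : α ≤ α') : ChainSeg f α' n x y := by
  obtain ⟨z, h0, h1, h2⟩ := h
  exact ⟨z, h0, h1, fun i hi => (h2 i hi).trans hle⟩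

lemma chainSeg_orbit (f : X → X) {α : ℝ} (hα : 0 ≤ α) (x : X) (n : ℕ) :
    ChainSeg f α n x (f^[n] x) := by
  refine ⟨fun i => f^[i] x, rfl, rfl, fun i _ => ?_⟩
  rw [← Function.iterate_succ_apply' f i x]
  simpa using hα

lemma chainSeg_single {f : X → X} {α : ℝ} {x y : X} (h : dist (f x) y ≤ α) :
    ChainSeg f α 1 x y := by
  refine ⟨fun i => if i = 0 then x else y, by simp, by simp, fun i hi => ?_⟩
  interval_cases i
  simpa using h

lemma ChainSeg.concat {f : X → X} {α : ℝ} {m n : ℕ} {x y w : X}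
    (h1 : ChainSeg f α m x y) (h2 : ChainSeg f α n y w) :
    ChainSeg f α (m + n) x w := by
  obtain ⟨z1, hz10, hz11, hz12⟩ := h1
  obtain ⟨z2, hz20, hz21, hz22⟩ := h2
  refine ⟨fun i => if i ≤ m then z1 i else z2 (i - m), by simp [hz10], ?_, fun i hi => ?_⟩
  · by_cases h : n = 0
    · subst h
      simp only [Nat.add_zero, le_refl, if_pos, hz11, ← hz20, hz21]
    · have : ¬ (m + n ≤ m) := by omega
      simp [this, hz21]
  · by_cases h : i + 1 ≤ m
    · have : i ≤ m := by omega
      have hi' : i < m := by omega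
      simp [h, this, hz12 i hi']
    · have him : ¬ (i + 1 ≤ m) := h
      by_cases h' : i ≤ m
      · have he : i = m := by omega
        subst he
        have : i + 1 - i = 1 := by omega
        simp only [le_refl, if_pos, him, if_neg, this, hz11, ← hz20]
        simpa [hz11, ← hz20] using hz22 0 (by omega)
      · have h2i : i - m < n := by omega
        have e1 : i + 1 - m = (i - m) + 1 := by omega
        simp only [him, if_neg, h', e1]
        exact hz22 (i - m) h2i

lemma chainRel_iff_exists_chainSeg {f : X → X} {α : ℝ} {x y : X} :
    ChainRel f α x y ↔ ∃ n, 0 < n ∧ ChainSeg f α n x y := by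
  constructor
  · rintro ⟨n, z, hn, h0, h1, h2⟩; exact ⟨n, hn, z, h0, h1, h2⟩
  · rintro ⟨n, hn, z, h0, h1, h2⟩; exact ⟨n, z, hn, h0, h1, h2⟩

end Aux
section Aux2

set_option linter.unusedSectionVars false

open Filter Topology Function

variable {X : Type*} [MetricSpace X]

lemma unif_cont [CompactSpace X] {f : X → X} (hf : Continuous f) :
    ∀ α > (0:ℝ), ∃ β > (0:ℝ), ∀ a b : X, dist a b ≤ β → dist (f a) (f b) ≤ α := by
  intro α hα
  have := CompactSpace.uniformContinuous_of_continuous hf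
  rw [Metric.uniformContinuous_iff] at this
  obtain ⟨δ, hδ, h⟩ := this α hα
  exact ⟨δ/2, by linarith, fun a b hab => le_of_lt (h (lt_of_le_of_lt hab (by linarith)))⟩

lemma unif_cont_iter [CompactSpace X] {f : X → X} (hf : Continuous f) (k : ℕ) :
    ∀ α > (0:ℝ), ∃ β > (0:ℝ), ∀ a b : X, dist a b ≤ β → dist (f^[k] a) (f^[k] b) ≤ α := by
  intro α hα
  have : UniformContinuous f^[k] :=
    CompactSpace.uniformContinuous_of_continuous (hf.iterate k)
  rw [Metric.uniformContinuous_iff] at this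
  obtain ⟨δ, hδ, h⟩ := this α hα
  exact ⟨δ/2, by linarith, fun a b hab => le_of_lt (h (lt_of_le_of_lt hab (by linarith)))⟩

lemma FullOrbit.apply_iterate {f : X → X} {z : ℤ → X} (hz : FullOrbit f z) (m : ℤ) (n : ℕ) :
    z (m + n) = f^[n] (z m) := by
  induction n with
  | zero => simp
  | succ k ih =>
      have : m + (k+1:ℕ) = (m + k) + 1 := by push_cast; ring
      rw [this, ← hz (m + k), ih, Function.iterate_succ_apply' f k (z m)]

lemma FullOrbit.shift {f : X → X} {z : ℤ → X} (hz : FullOrbit f z) (k : ℤ) :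
    FullOrbit f (fun m => z (m + k)) := by
  intro m
  have := hz (m + k)
  simpa [add_right_comm] using this

/-- a full orbit through any point, agreeing with forward iterates -/
lemma exists_fullOrbit {f : X → X} (hsurj : Function.Surjective f) (x : X) :
    ∃ z : ℤ → X, FullOrbit f z ∧ ∀ n : ℕ, z n = f^[n] x := by
  classical
  choose g hg using hsurj
  refine ⟨fun m => if 0 ≤ m then f^[m.toNat] x else g^[(-m).toNat] x, ?_, ?_⟩
  · intro m
    rcases lt_trichotomy m (-1) with h | h | h
    · have h1 : ¬ (0 ≤ m) := by omega
      have h2 : ¬ (0 ≤ m + 1) := by omega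
      have h3 : (-m).toNat = (-(m+1)).toNat + 1 := by omega
      simp only [h1, if_neg, h2, h3]
      rw [Function.iterate_succ_apply' g _ x]
      exact hg _
    · subst h
      simp [hg]
    · have h1 : 0 ≤ m := by omega
      have h2 : 0 ≤ m + 1 := by omega
      have h3 : (m+1).toNat = m.toNat + 1 := by omega
      simp only [h1, if_pos, h2, h3]
      rw [Function.iterate_succ_apply' f _ x]
  · intro n
    simp

/-- the periodic full orbit through a periodic point -/
noncomputable def perOrbit (f : X → X) (p : X) (π : ℕ) : ℤ → X :=
  fun m => f^[(m % (π:ℤ)).toNat] p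

lemma perOrbit_fullOrbit {f : X → X} {p : X} {π : ℕ} (hπ : 0 < π)
    (hper : Function.IsPeriodicPt f π p) : FullOrbit f (perOrbit f p π) := by
  intro m
  unfold perOrbit
  have hπ' : (0:ℤ) < π := by exact_mod_cast hπ
  have h0 : 0 ≤ m % (π:ℤ) := Int.emod_nonneg m (by omega)
  have h1 : m % (π:ℤ) < π := Int.emod_lt_of_pos m hπ'
  have key : (m+1) % (π:ℤ) = (m % (π:ℤ) + 1) % (π:ℤ) := by
    rw [Int.add_emod]
    conv_rhs => rw [Int.add_emod, Int.emod_emod_of_dvd _ dvd_rfl]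
  by_cases h : m % (π:ℤ) + 1 = π
  · have e : (m+1) % (π:ℤ) = 0 := by rw [key, h, Int.emod_self]
    rw [e]
    have e2 : (m % (π:ℤ)).toNat + 1 = π := by omega
    simp only [Int.toNat_zero, Function.iterate_zero, id_eq]
    rw [← Function.iterate_succ_apply' f _ p, Nat.succ_eq_add_one, e2]
    exact hper
  · have e : (m+1) % (π:ℤ) = m % (π:ℤ) + 1 := by
      rw [key]; exact Int.emod_eq_of_lt (by omega) (by omega)
    rw [e]
    have e2 : (m % (π:ℤ) + 1).toNat = (m % (π:ℤ)).toNat + 1 := by omega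
    rw [e2, Function.iterate_succ_apply' f _ p]

lemma perOrbit_natCast {f : X → X} {p : X} {π : ℕ} (hπ : 0 < π)
    (hper : Function.IsPeriodicPt f π p) (n : ℕ) : perOrbit f p π n = f^[n] p := by
  unfold perOrbit
  have e : ((n:ℤ) % (π:ℤ)).toNat = n % π := by
    rw [← Int.natCast_mod, Int.toNat_natCast]
  rw [e, hper.iterate_mod_apply]

lemma perOrbit_neg_dvd {f : X → X} {p : X} {π : ℕ} (hπ : 0 < π)
    (hper : Function.IsPeriodicPt f π p) (s : ℕ) (hs : (π:ℤ) ∣ (s:ℤ)) :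
    perOrbit f p π (-(s:ℤ)) = p := by
  unfold perOrbit
  have e : (-(s:ℤ)) % (π:ℤ) = 0 := Int.emod_eq_zero_of_dvd (Dvd.dvd.neg_right hs)
  rw [e]
  simp

end Aux2
section Aux3

set_option linter.unusedSectionVars false

open Filter Topology Function

variable {X : Type*} [MetricSpace X] [CompactSpace X] {f : X → X} {B : Set X}

lemma basic_mem_iff (hB : IsBasicSet f B) :
    ∃ x₀, ChainRecurrent f x₀ ∧ x₀ ∈ B ∧
      ∀ y, y ∈ B ↔ (ChainRecurrent f y ∧ ChainEquiv f x₀ y) := by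
  obtain ⟨x₀, hx₀, hEq⟩ := hB
  refine ⟨x₀, hx₀, ?_, fun y => by rw [hEq]; rfl⟩
  rw [hEq]
  exact ⟨hx₀, fun α hα => ⟨hx₀ α hα, hx₀ α hα⟩⟩

/-- any two points of a basic set are joined by chains of every jump size -/
lemma basic_chainSeg (hB : IsBasicSet f B) {a b : X} (ha : a ∈ B) (hb : b ∈ B) :
    ∀ α > (0:ℝ), ∃ n, 0 < n ∧ ChainSeg f α n a b := by
  intro α hα
  obtain ⟨x₀, hx₀, _, hiff⟩ := basic_mem_iff hB
  obtain ⟨-, hEa⟩ := (hiff a).1 ha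
  obtain ⟨-, hEb⟩ := (hiff b).1 hb
  obtain ⟨n1, hn1, s1⟩ := chainRel_iff_exists_chainSeg.1 (hEa α hα).2
  obtain ⟨n2, hn2, s2⟩ := chainRel_iff_exists_chainSeg.1 (hEb α hα).1
  exact ⟨n1 + n2, by omega, s1.concat s2⟩

/-- pushforward of chains under f -/
lemma ChainSeg.push (hf : Continuous f) {α β : ℝ} {n : ℕ} {a b : X}
    (h : ChainSeg f β n a b)
    (hub : ∀ u v : X, dist u v ≤ β → dist (f u) (f v) ≤ α) :
    ChainSeg f α n (f a) (f b) := by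
  obtain ⟨z, h0, h1, h2⟩ := h
  exact ⟨fun i => f (z i), by simp [h0], by simp [h1], fun i hi => hub _ _ (h2 i hi)⟩

lemma basic_image (hf : Continuous f) (hB : IsBasicSet f B) {a : X} (ha : a ∈ B) :
    f a ∈ B := by
  obtain ⟨x₀, hx₀, hx₀B, hiff⟩ := basic_mem_iff hB
  obtain ⟨hCRa, hEa⟩ := (hiff a).1 ha
  rw [hiff]
  have half : ∀ α : ℝ, 0 < α → 0 < α/2 := fun α hα => by linarith
  constructor
  · -- chain recurrence of f a
    intro α hα
    obtain ⟨β, hβ, hub⟩ := unif_cont hf (α/2) (half α hα)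
    obtain ⟨n, hn, s⟩ := chainRel_iff_exists_chainSeg.1 (hCRa (min β (α/2)) (by positivity))
    have s' : ChainSeg f α n (f a) (f a) :=
      (s.mono (min_le_left _ _)).push hf
        (fun u v huv => le_trans (hub u v huv) (by linarith))
    exact chainRel_iff_exists_chainSeg.2 ⟨n, hn, s'⟩
  · -- chain equivalence with x₀
    intro α hα
    obtain ⟨β, hβ, hub⟩ := unif_cont hf (α/2) (half α hα)
    constructor
    · -- x₀ → f a
      obtain ⟨n, hn, s⟩ := chainRel_iff_exists_chainSeg.1 ((hEa α hα).1)
      exact chainRel_iff_exists_chainSeg.2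
        ⟨n + 1, by omega, s.concat (chainSeg_single (by simp [le_of_lt hα]))⟩
    · -- f a → x₀ : first get a chain from f a to a
      have hrec : ∃ n, 0 < n ∧ ChainSeg f α n (f a) a := by
        set γ := min β (α/2) with hγ
        have hγpos : (0:ℝ) < γ := by positivity
        have hγ1 : γ ≤ β := min_le_left _ _
        have hγ2 : γ ≤ α/2 := min_le_right _ _
        obtain ⟨n, hn, s⟩ := chainRel_iff_exists_chainSeg.1 (hCRa γ hγpos)
        -- double it to ensure length ≥ 2
        have s2 : ChainSeg f γ (n + n) a a := s.concat s
        obtain ⟨z, h0, h1, h2⟩ := s2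
        refine ⟨n + n - 1, by omega, fun i => if i = 0 then f a else z (i + 1), by simp, ?_, ?_⟩
        · show (if n + n - 1 = 0 then f a else z (n + n - 1 + 1)) = a
          have hc : ¬ (n + n - 1 = 0) := by omega
          have e : n + n - 1 + 1 = n + n := by omega
          rw [if_neg hc, e, h1]
        · intro i hi
          simp only []
          by_cases h : i = 0
          · subst h
            have hc : ¬ (0 + 1 = 0) := by omega
            simp [if_pos, hc, if_neg]
            have d1 : dist (f a) (z 1) ≤ γ := by
              have h20 := h2 0 (by omega)
              rwa [h0] at h20
            calc dist (f (f a)) (z (0 + 1 + 1))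
                ≤ dist (f (f a)) (f (z 1)) + dist (f (z 1)) (z 2) := dist_triangle _ _ _
              _ ≤ α/2 + γ := add_le_add (hub _ _ (d1.trans hγ1)) (h2 1 (by omega))
              _ ≤ α := by linarith
          · have h'' : ¬ (i + 1 = 0) := by omega
            simp [h, if_neg, h'', if_neg]
            exact (h2 (i+1) (by omega)).trans (by linarith)
      obtain ⟨n1, hn1, s1⟩ := hrec
      obtain ⟨n2, hn2, s2⟩ := chainRel_iff_exists_chainSeg.1 ((hEa α hα).2)
      exact chainRel_iff_exists_chainSeg.2 ⟨n1 + n2, by omega, s1.concat s2⟩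

lemma basic_iterate (hf : Continuous f) (hB : IsBasicSet f B) {a : X} (ha : a ∈ B) (n : ℕ) :
    f^[n] a ∈ B := by
  induction n with
  | zero => simpa using ha
  | succ k ih => rw [Function.iterate_succ_apply']; exact basic_image hf hB ih

/-- basic sets absorb limits -/
lemma basic_limit (hf : Continuous f) (hB : IsBasicSet f B) {y : X}
    (hy : ∀ γ > (0:ℝ), ∃ b ∈ B, dist y b ≤ γ) : y ∈ B := by
  obtain ⟨x₀, hx₀, hx₀B, hiff⟩ := basic_mem_iff hB
  rw [hiff]
  have key : ∀ α > (0:ℝ), ∃ b ∈ B, dist y b ≤ α ∧ dist (f y) (f b) ≤ α := by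
    intro α hα
    obtain ⟨β, hβ, hub⟩ := unif_cont hf α hα
    obtain ⟨b, hbB, hba⟩ := hy (min β α) (by positivity)
    exact ⟨b, hbB, hba.trans (min_le_right _ _), hub _ _ (hba.trans (min_le_left _ _))⟩
  constructor
  · intro α hα
    obtain ⟨b, hbB, hyb, hfyb⟩ := key (α/2) (by linarith)
    obtain ⟨n, hn, s0⟩ := basic_chainSeg hB hbB hbB (α/2) (by linarith)
    have s2 : ChainSeg f (α/2) (n + n) b b := s0.concat s0
    obtain ⟨z, h0, h1, h2⟩ := s2
    refine chainRel_iff_exists_chainSeg.2 ⟨n + n, by omega,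
      ⟨fun i => if i = 0 then y else if i = n + n then y else z i, by simp, ?_, ?_⟩⟩
    · have hc : ¬ (n + n = 0) := by omega
      simp [hc]
    · intro i hi
      simp only []
      by_cases hi0 : i = 0
      · subst hi0
        have e1 : ¬ (0 + 1 = 0) := by omega
        have hn1 : ¬ (0 + 1 = n + n) := by omega
        simp [if_pos, e1, if_neg, hn1, if_neg]
        have h20 := h2 0 (by omega)
        rw [h0] at h20
        calc dist (f y) (z (0 + 1)) ≤ dist (f y) (f b) + dist (f b) (z (0+1)) :=
              dist_triangle _ _ _
          _ ≤ α/2 + α/2 := add_le_add hfyb h20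
          _ ≤ α := by linarith
      · by_cases hie : i + 1 = n + n
        · have h3 : ¬ (i = n + n) := by omega
          have h4 : ¬ (i + 1 = 0) := by omega
          simp [hi0, if_neg, h3, h4, hie, if_pos]
          calc dist (f (z i)) y ≤ dist (f (z i)) (z (i+1)) + dist (z (i+1)) y :=
                dist_triangle _ _ _
            _ ≤ α/2 + α/2 := by
                refine add_le_add (h2 i (by omega)) ?_
                rw [hie, h1]
                exact dist_comm y b ▸ hyb
            _ ≤ α := by linarith
        · have h3 : ¬ (i = n + n) := by omega
          have h4 : ¬ (i + 1 = 0) := by omega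
          simp [hi0, if_neg, h3, h4, hie, if_neg]
          exact (h2 i (by omega)).trans (by linarith)
  · intro α hα
    obtain ⟨b, hbB, hyb, hfyb⟩ := key (α/2) (by linarith)
    obtain ⟨hCRb, hEb⟩ := (hiff b).1 hbB
    constructor
    · -- x₀ → y : chain to b, then replace endpoint
      obtain ⟨n, hn, z, h0, h1, h2⟩ := chainRel_iff_exists_chainSeg.1 ((hEb (α/2) (by linarith)).1)
      refine chainRel_iff_exists_chainSeg.2 ⟨n, hn,
        ⟨fun i => if i = n then y else z i, ?_, by simp, ?_⟩⟩
      · have hc : ¬ (0 = n) := by omega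
        simp [hc, h0]
      · intro i hi
        simp only []
        by_cases hie : i + 1 = n
        · have h3 : ¬ (i = n) := by omega
          simp [h3, if_neg, hie, if_pos]
          calc dist (f (z i)) y ≤ dist (f (z i)) (z (i+1)) + dist (z (i+1)) y :=
                dist_triangle _ _ _
            _ ≤ α/2 + α/2 := by
                refine add_le_add (h2 i (by omega)) ?_
                rw [hie, h1]
                exact dist_comm y b ▸ hyb
            _ ≤ α := by linarith
        · have h3 : ¬ (i = n) := by omega
          simp [h3, if_neg, hie, if_neg]
          exact (h2 i (by omega)).trans (by linarith)
    · -- y → x₀ : chain from b, replace start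
      obtain ⟨n, hn, z, h0, h1, h2⟩ := chainRel_iff_exists_chainSeg.1 ((hEb (α/2) (by linarith)).2)
      refine chainRel_iff_exists_chainSeg.2 ⟨n, hn,
        ⟨fun i => if i = 0 then y else z i, by simp, ?_, ?_⟩⟩
      · have hc : ¬ (n = 0) := by omega
        simp [hc, h1]
      · intro i hi
        simp only []
        by_cases hi0 : i = 0
        · subst hi0
          have e1 : ¬ (0 + 1 = 0) := by omega
          simp [if_pos, e1, if_neg]
          have h20 := h2 0 (by omega)
          rw [h0] at h20
          calc dist (f y) (z (0 + 1)) ≤ dist (f y) (f b) + dist (f b) (z (0+1)) :=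
                dist_triangle _ _ _
            _ ≤ α/2 + α/2 := add_le_add hfyb h20
            _ ≤ α := by linarith
        · have h4 : ¬ (i + 1 = 0) := by omega
          simp [hi0, if_neg, h4, if_neg]
          exact (h2 i hi).trans (by linarith)

end Aux3
section Aux4

set_option linter.unusedSectionVars false

open Filter Topology Function

variable {X : Type*} [MetricSpace X] [CompactSpace X] {f : X → X}

/-- two-sided shadowing from one-sided shadowing, via compactness -/
lemma twoSided_shadowing (hf : Continuous f) (hsh : Shadowing f) :
    ∀ ε > (0:ℝ), ∃ δ > (0:ℝ), ∀ x : ℤ → X,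
      (∀ m : ℤ, dist (f (x m)) (x (m+1)) ≤ δ) →
      ∃ z : ℤ → X, FullOrbit f z ∧ ∀ m : ℤ, dist (z m) (x m) ≤ ε := by
  intro ε hε
  obtain ⟨δ, hδ, hsh'⟩ := hsh ε hε
  refine ⟨δ, hδ, fun x hx => ?_⟩
  -- for each k, shadow the pseudo-orbit started at -k
  have hk : ∀ k : ℕ, ∃ v : X, ∀ n : ℕ, dist (f^[n] v) (x ((n:ℤ) - (k:ℤ))) ≤ ε := by
    intro k
    refine hsh' (fun n => x ((n:ℤ) - (k:ℤ))) (fun n => ?_)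
    have e : ((n+1:ℕ):ℤ) - (k:ℤ) = ((n:ℤ) - (k:ℤ)) + 1 := by push_cast; ring
    rw [e]
    exact hx _
  choose v hv using hk
  -- candidate approximations
  set w : ℕ → (ℤ → X) := fun k m => if 0 ≤ m + k then f^[(m + (k:ℤ)).toNat] (v k) else x m
    with hw
  obtain ⟨z, hz⟩ := exists_clusterPt_of_compactSpace (Filter.map w atTop)
  have hmem : ∀ C : Set (ℤ → X), IsClosed C → (∃ K : ℕ, ∀ k ≥ K, w k ∈ C) → z ∈ C := by
    intro C hC ⟨K, hK⟩
    have hCF : C ∈ Filter.map w atTop := by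
      rw [Filter.mem_map]
      exact Filter.mem_of_superset (Filter.mem_atTop K) (fun k hk => hK k hk)
    have : ClusterPt z (Filter.principal C) := by
      refine ClusterPt.mono hz ?_
      exact Filter.le_principal_iff.2 hCF
    rw [← mem_closure_iff_clusterPt] at this
    rwa [hC.closure_eq] at this
  have hzd : ∀ m : ℤ, dist (z m) (x m) ≤ ε := by
    intro m
    refine hmem {u | dist (u m) (x m) ≤ ε} ?_ ⟨(-m).toNat + 1, fun k hk => ?_⟩
    · exact IsClosed.preimage (Continuous.dist (continuous_apply m) continuous_const)
        isClosed_Iic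
    · have hmk : 0 ≤ m + k := by omega
      have e : ((((m + (k:ℤ)).toNat : ℕ) : ℤ)) - (k:ℤ) = m := by omega
      simp only [hw, Set.mem_setOf_eq, hmk, if_pos]
      have := hv k (m + (k:ℤ)).toNat
      rwa [e] at this
  have hzo : FullOrbit f z := by
    intro m
    have : z ∈ {u : ℤ → X | f (u m) = u (m+1)} := by
      refine hmem _ ?_ ⟨(-m).toNat + 1, fun k hk => ?_⟩
      · exact isClosed_eq ((hf.comp (continuous_apply m))) (continuous_apply (m+1))
      · have hmk : 0 ≤ m + k := by omega
        have hmk1 : 0 ≤ m + 1 + k := by omega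
        have e : (m + 1 + (k:ℤ)).toNat = (m + (k:ℤ)).toNat + 1 := by omega
        simp only [hw, Set.mem_setOf_eq, hmk, if_pos, hmk1, e]
        rw [Function.iterate_succ_apply' f _ (v k)]
    exact this
  exact ⟨z, hzo, hzd⟩

end Aux4
section Aux5

set_option linter.unusedSectionVars false

open Filter Topology Function

variable {X : Type*} [MetricSpace X] [CompactSpace X] {f : X → X} {B : Set X}

/-- a full orbit which is captured by `B` forward and backward lies in `B` -/
lemma basic_mem_of_captures (hf : Continuous f) (hB : IsBasicSet f B) {Z : ℤ → X}
    (hZ : FullOrbit f Z)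
    (Hf : ∀ α > (0:ℝ), ∀ M : ℤ, ∃ m : ℤ, M ≤ m ∧ ∃ b ∈ B, dist (Z m) b ≤ α)
    (Hb : ∀ α > (0:ℝ), ∀ M : ℤ, ∃ n : ℤ, n ≤ M ∧ ∃ b ∈ B, dist (f b) (Z n) ≤ α)
    (t : ℤ) : Z t ∈ B := by
  obtain ⟨x₀, hx₀, hx₀B, hiff⟩ := basic_mem_iff hB
  -- building blocks
  have seg_fwd : ∀ α > (0:ℝ), ∃ b ∈ B, ∃ j, 0 < j ∧ ChainSeg f α j (Z t) b := by
    intro α hα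
    obtain ⟨m, hm, b, hbB, hd⟩ := Hf α hα (t + 1)
    have hj : ∃ j : ℕ, (m : ℤ) = t + j ∧ 1 ≤ j := by
      refine ⟨(m - t).toNat, by omega, by omega⟩
    obtain ⟨j, hje, hj1⟩ := hj
    have horb : ChainSeg f α (j - 1) (Z t) (Z (m - 1)) := by
      have e : Z (m - 1) = f^[j-1] (Z t) := by
        have := hZ.apply_iterate t (j - 1)
        rw [← this]
        congr 1
        omega
      rw [e]
      exact chainSeg_orbit f (le_of_lt hα) (Z t) (j - 1)
    have hstep : ChainSeg f α 1 (Z (m - 1)) b := by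
      refine chainSeg_single ?_
      have e : f (Z (m-1)) = Z m := by
        have := hZ (m - 1)
        rwa [sub_add_cancel] at this
      rwa [e]
    exact ⟨b, hbB, j, by omega, by
      have := horb.concat hstep
      have e : j - 1 + 1 = j := by omega
      rwa [e] at this⟩
  have seg_bwd : ∀ α > (0:ℝ), ∃ b ∈ B, ∃ j, 0 < j ∧ ChainSeg f α j b (Z t) := by
    intro α hα
    obtain ⟨n, hn, b, hbB, hd⟩ := Hb α hα (t - 1)
    have hstep : ChainSeg f α 1 b (Z n) := chainSeg_single hd
    have hj : ∃ j : ℕ, t = n + (j:ℤ) ∧ 1 ≤ j := ⟨(t - n).toNat, by omega, by omega⟩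
    obtain ⟨j, hje, hj1⟩ := hj
    have horb : ChainSeg f α j (Z n) (Z t) := by
      have e : Z t = f^[j] (Z n) := by rw [← hZ.apply_iterate n j, ← hje]
      rw [e]
      exact chainSeg_orbit f (le_of_lt hα) (Z n) j
    exact ⟨b, hbB, 1 + j, by omega, hstep.concat horb⟩
  rw [hiff]
  constructor
  · intro α hα
    obtain ⟨b, hbB, j1, hj1, s1⟩ := seg_fwd α hα
    obtain ⟨b', hb'B, j2, hj2, s2⟩ := seg_bwd α hα
    obtain ⟨j3, hj3, s3⟩ := basic_chainSeg hB hbB hb'B α hα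
    exact chainRel_iff_exists_chainSeg.2 ⟨j1 + j3 + j2, by omega, (s1.concat s3).concat s2⟩
  · intro α hα
    obtain ⟨b, hbB, j1, hj1, s1⟩ := seg_fwd α hα
    obtain ⟨b', hb'B, j2, hj2, s2⟩ := seg_bwd α hα
    obtain ⟨j3, hj3, s3⟩ := basic_chainSeg hB hx₀B hb'B α hα
    obtain ⟨j4, hj4, s4⟩ := basic_chainSeg hB hbB hx₀B α hα
    constructor
    · exact chainRel_iff_exists_chainSeg.2 ⟨j3 + j2, by omega, s3.concat s2⟩
    · exact chainRel_iff_exists_chainSeg.2 ⟨j1 + j4, by omega, s1.concat s4⟩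

end Aux5
section Aux6

set_option linter.unusedSectionVars false

open Filter Topology Function

variable {X : Type*} [MetricSpace X] [CompactSpace X] {f : X → X} {B : Set X} {c : ℝ}

/-- Master construction: shadow a pseudo-orbit made of a backward orbit in `B`,
a finite chain, and a forward orbit in `B`. -/
lemma master (hf : Continuous f) (hB : IsBasicSet f B)
    (hc : 0 < c) (hexp : BiAsympCExpWith f c) (hsh : Shadowing f) :
    ∀ ε > (0:ℝ), ∃ δ > (0:ℝ), ∀ (P V : ℤ → X) (T : ℕ) (seg : ℕ → X),
      FullOrbit f P → FullOrbit f V → (∀ m : ℤ, P m ∈ B) → (∀ n : ℕ, V (n:ℤ) ∈ B) →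
      0 < T → seg 0 = P 0 → seg T = V 0 → (∀ i < T, dist (f (seg i)) (seg (i+1)) ≤ δ) →
      ∃ z : ℤ → X, FullOrbit f z ∧
        (∀ i : ℕ, i ≤ T → dist (z (i:ℤ)) (seg i) ≤ ε) ∧
        Tendsto (fun n : ℕ => dist (z ((T:ℤ) + (n:ℤ))) (V (n:ℤ))) atTop (𝓝 0) ∧
        Tendsto (fun n : ℕ => dist (z (-(n:ℤ))) (P (-(n:ℤ)))) atTop (𝓝 0) ∧
        (∀ m : ℤ, z m ∈ B) := by
  intro ε hε
  set ε₁ := min ε c with hε₁def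
  have hε₁ : 0 < ε₁ := lt_min hε hc
  obtain ⟨δ, hδ, hshad⟩ := twoSided_shadowing hf hsh ε₁ hε₁
  refine ⟨δ, hδ, ?_⟩
  intro P V T seg hP hV hPB hVB hT hseg0 hsegT hsegstep
  -- the pseudo-orbit
  set x : ℤ → X := fun m => if m ≤ 0 then P m else if m ≤ (T:ℤ) then seg m.toNat else V (m - T)
    with hx
  have hx_nonpos : ∀ m : ℤ, m ≤ 0 → x m = P m := by
    intro m hm; simp only [hx, hm, if_pos]
  have hx_mid : ∀ i : ℕ, i ≤ T → x (i:ℤ) = seg i := by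
    intro i hi
    by_cases h : (i:ℤ) ≤ 0
    · have hi0 : i = 0 := by omega
      subst hi0
      simp [hx, hseg0]
    · have h2 : (i:ℤ) ≤ (T:ℤ) := by exact_mod_cast hi
      simp [hx, h, h2]
      intro h0; exact absurd (by omega) h
  have hx_fwd : ∀ n : ℕ, x ((T:ℤ) + (n:ℤ)) = V (n:ℤ) := by
    intro n
    by_cases h : n = 0
    · subst h
      simp only [Int.natCast_zero, add_zero]
      rw [hx_mid T (le_refl T), hsegT]
    · have hn1 : 1 ≤ n := by omega
      have h1 : ¬ ((T:ℤ) + (n:ℤ) ≤ 0) := by push_cast; omega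
      have h2 : ¬ ((T:ℤ) + (n:ℤ) ≤ (T:ℤ)) := by push_cast; omega
      simp only [hx, h1, if_neg, h2, if_neg]
      congr 1
      push_cast
      ring
  -- pseudo-orbit property
  have hxstep : ∀ m : ℤ, dist (f (x m)) (x (m+1)) ≤ δ := by
    intro m
    rcases lt_trichotomy m 0 with hm | hm | hm
    · rw [hx_nonpos m (by omega), hx_nonpos (m+1) (by omega), hP m]
      simp [le_of_lt hδ]
    · subst hm
      rw [hx_nonpos 0 (le_refl 0), ← hseg0]
      have e1 : (0:ℤ) + 1 = ((1:ℕ):ℤ) := by norm_num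
      rw [e1, hx_mid 1 (by omega)]
      exact hsegstep 0 hT
    · rcases lt_trichotomy m (T:ℤ) with hmT | hmT | hmT
      · have d1 : x m = seg m.toNat := by
          have e1 : m = ((m.toNat : ℕ) : ℤ) := by omega
          conv_lhs => rw [e1]
          exact hx_mid m.toNat (by omega)
        have d2 : x (m + 1) = seg (m.toNat + 1) := by
          have e2 : m + 1 = ((m.toNat + 1 : ℕ) : ℤ) := by omega
          conv_lhs => rw [e2]
          exact hx_mid (m.toNat + 1) (by omega)
        rw [d1, d2]
        exact hsegstep m.toNat (by omega)
      · subst hmT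
        have d1 : x (T:ℤ) = V 0 := by rw [hx_mid T (le_refl T), hsegT]
        have d2 : x ((T:ℤ) + 1) = V 1 := by
          have e1 : (T:ℤ) + 1 = (T:ℤ) + ((1:ℕ):ℤ) := by norm_num
          rw [e1, hx_fwd 1, Int.natCast_one]
        rw [d1, d2, hV 0]
        simp [le_of_lt hδ]
      · have h1 : ¬ (m ≤ 0) := by omega
        have h2 : ¬ (m ≤ (T:ℤ)) := by omega
        have h3 : ¬ (m + 1 ≤ 0) := by omega
        have h4 : ¬ (m + 1 ≤ (T:ℤ)) := by omega
        simp only [hx]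
        rw [if_neg h1, if_neg h2, if_neg h3, if_neg h4]
        have e : m + 1 - T = (m - T) + 1 := by ring
        rw [e, hV (m - T)]
        simp [le_of_lt hδ]
  obtain ⟨z, hzorb, hzd⟩ := hshad x hxstep
  have hε₁ε : ε₁ ≤ ε := min_le_left _ _
  have hε₁c : ε₁ ≤ c := min_le_right _ _
  -- forward asymptotics
  have hfwd : Tendsto (fun n : ℕ => dist (z ((T:ℤ) + (n:ℤ))) (V (n:ℤ))) atTop (𝓝 0) := by
    have hz' : FullOrbit f (fun m => z (m + (T:ℤ))) := hzorb.shift T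
    have key := hexp.1 (fun m => z (m + (T:ℤ))) V hz' hV (fun n => by
      have := hzd ((T:ℤ) + (n:ℤ))
      rw [hx_fwd n] at this
      simp only [add_comm]
      exact this.trans hε₁c)
    simp only [add_comm] at key ⊢
    exact key
  -- backward asymptotics
  have hbwd : Tendsto (fun n : ℕ => dist (z (-(n:ℤ))) (P (-(n:ℤ)))) atTop (𝓝 0) := by
    exact hexp.2 z P hzorb hP (fun n => by
      have := hzd (-(n:ℤ))
      rw [hx_nonpos _ (by omega)] at this
      exact this.trans hε₁c)
  refine ⟨z, hzorb, ?_, hfwd, hbwd, ?_⟩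
  · intro i hi
    have := hzd (i:ℤ)
    rw [hx_mid i hi] at this
    exact this.trans hε₁ε
  · -- membership in B
    intro m
    refine basic_mem_of_captures hf hB hzorb ?_ ?_ m
    · intro α hα M
      rw [Metric.tendsto_atTop] at hfwd
      obtain ⟨N, hN⟩ := hfwd α hα
      set n := max N (max 0 M).toNat with hn
      refine ⟨(T:ℤ) + (n:ℤ), by omega, V (n:ℤ), hVB n, ?_⟩
      have h' := hN n (le_max_left _ _)
      rw [Real.dist_0_eq_abs, abs_of_nonneg dist_nonneg] at h'
      exact le_of_lt h'
    · intro α hα M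
      rw [Metric.tendsto_atTop] at hbwd
      obtain ⟨N, hN⟩ := hbwd α hα
      set n := max N (max 0 (-M)).toNat with hn
      refine ⟨-(n:ℤ), by omega, P (-(n:ℤ) - 1), hPB _, ?_⟩
      have e : f (P (-(n:ℤ) - 1)) = P (-(n:ℤ)) := by
        have := hP (-(n:ℤ) - 1)
        rwa [sub_add_cancel] at this
      rw [e]
      have h' := hN n (le_max_left _ _)
      rw [Real.dist_0_eq_abs, abs_of_nonneg dist_nonneg] at h'
      rw [dist_comm]
      exact le_of_lt h'

end Aux6
section Aux7

set_option linter.unusedSectionVars false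

open Filter Topology Function

variable {X : Type*} [MetricSpace X] [CompactSpace X] {f : X → X} {B : Set X} {c : ℝ}

lemma tendsto_zero_of_le {g : ℕ → ℝ} (hg : ∀ n, 0 ≤ g n)
    (h : ∀ ε > (0:ℝ), ∃ N, ∀ n ≥ N, g n ≤ ε) : Tendsto g atTop (𝓝 0) := by
  rw [Metric.tendsto_atTop]
  intro ε hε
  obtain ⟨N, hN⟩ := h (ε/2) (by linarith)
  refine ⟨N, fun n hn => ?_⟩
  rw [Real.dist_0_eq_abs, abs_of_nonneg (hg n)]
  linarith [hN n hn]

lemma le_of_tendsto_zero {g : ℕ → ℝ} (hg : ∀ n, 0 ≤ g n)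
    (h : Tendsto g atTop (𝓝 0)) : ∀ ε > (0:ℝ), ∃ N, ∀ n ≥ N, g n ≤ ε := by
  intro ε hε
  rw [Metric.tendsto_atTop] at h
  obtain ⟨N, hN⟩ := h ε hε
  refine ⟨N, fun n hn => ?_⟩
  have := hN n hn
  rw [Real.dist_0_eq_abs, abs_of_nonneg (hg n)] at this
  exact le_of_lt this

lemma ChainSeg.pow {f : X → X} {α : ℝ} {Λ : ℕ} {a : X} (h : ChainSeg f α Λ a a) :
    ∀ g : ℕ, ChainSeg f α (g * Λ) a a := by
  intro g
  induction g with
  | zero => exact ⟨fun _ => a, rfl, rfl, fun i hi => absurd hi (by omega)⟩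
  | succ k ih =>
      have := ih.concat h
      have e : k * Λ + Λ = (k+1) * Λ := by ring
      rwa [e] at this

/-- concatenation remembering the junction value -/
lemma ChainSeg.concat_mid {f : X → X} {α : ℝ} {m n : ℕ} {x y w : X}
    (h1 : ChainSeg f α m x y) (h2 : ChainSeg f α n y w) :
    ∃ z : ℕ → X, z 0 = x ∧ z (m + n) = w ∧ z m = y ∧
      ∀ i < m + n, dist (f (z i)) (z (i + 1)) ≤ α := by
  obtain ⟨z1, hz10, hz11, hz12⟩ := h1
  obtain ⟨z2, hz20, hz21, hz22⟩ := h2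
  have key : ChainSeg f α (m + n) x w := ChainSeg.concat ⟨z1, hz10, hz11, hz12⟩ ⟨z2, hz20, hz21, hz22⟩
  -- rebuild explicitly
  refine ⟨fun i => if i ≤ m then z1 i else z2 (i - m), by simp [hz10], ?_, by simp [hz11], ?_⟩
  · by_cases h : n = 0
    · subst h
      simp [hz11, ← hz20, hz21]
    · have hc : ¬ (m + n ≤ m) := by omega
      simp [hc, hz21]
  · intro i hi
    simp only []
    by_cases h : i + 1 ≤ m
    · have h' : i ≤ m := by omega
      simp [h, h', hz12 i (by omega)]
    · by_cases h' : i ≤ m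
      · have he : i = m := by omega
        subst he
        have e2 : i + 1 - i = 1 := by omega
        simp only [le_refl, if_pos, h, if_neg, e2]
        have := hz22 0 (by omega)
        rwa [hz20, ← hz11] at this
      · have h2i : i - m < n := by omega
        have e1 : i + 1 - m = (i - m) + 1 := by omega
        simp only [h, if_neg, h', e1]
        exact hz22 (i - m) h2i

/-- Main Lemma 1: the stable set of q inside B is contained in C_p. -/
lemma main1 (hf : Continuous f) (hsurj : Function.Surjective f) (hB : IsBasicSet f B)
    (hc : 0 < c) (hexp : BiAsympCExpWith f c) (hsh : Shadowing f)
    {p q : X} (hp : p ∈ Function.periodicPts f) (hpB : p ∈ B)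
    (hq : q ∈ Function.periodicPts f)
    (hqC : q ∈ closure (Ws f p ∩ B)) :
    Ws f q ∩ B ⊆ closure (Ws f p ∩ B) := by
  obtain ⟨πp, hπp, hperp⟩ := hp
  obtain ⟨πq, hπq, hperq⟩ := hq
  rintro y ⟨hyWs, hyB⟩
  rw [Metric.mem_closure_iff]
  intro ε hε
  obtain ⟨δ, hδ, hmaster⟩ := master hf hB hc hexp hsh (ε/2) (by linarith)
  -- choose w
  rw [Metric.mem_closure_iff] at hqC
  obtain ⟨w, ⟨hwWs, hwB⟩, hwq⟩ := hqC (δ/2) (by linarith)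
  -- choose N
  have hyWs' : Tendsto (fun n : ℕ => dist (f^[n] q) (f^[n] y)) atTop (𝓝 0) := hyWs
  obtain ⟨N₀, hN₀⟩ := le_of_tendsto_zero (fun n => dist_nonneg) hyWs' (δ/2) (by linarith)
  set N := πp * πq * (N₀ + 1) with hN
  have hNq : πq ∣ N := ⟨πp * (N₀ + 1), by ring⟩
  have hNp : πp ∣ N := ⟨πq * (N₀ + 1), by ring⟩
  have hN₁ : N₀ ≤ N := by
    have h1 : 1 ≤ πp := hπp
    have h2 : 1 ≤ πq := hπq
    calc N₀ ≤ N₀ + 1 := by omega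
      _ ≤ πp * πq * (N₀ + 1) := Nat.le_mul_of_pos_left (N₀ + 1) (by positivity)
  have hNpos : 0 < N := by positivity
  have hfNq : f^[N] q = q := by
    obtain ⟨k, hk⟩ := hNq
    rw [hk]
    exact Function.IsPeriodicPt.mul_const hperq k
  have hdist : dist (f^[N] y) w ≤ δ := by
    calc dist (f^[N] y) w ≤ dist (f^[N] y) q + dist q w := dist_triangle _ _ _
      _ ≤ δ/2 + δ/2 := by
          refine add_le_add ?_ (le_of_lt hwq)
          have := hN₀ N hN₁
          rw [hfNq] at this
          rwa [dist_comm]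
      _ = δ := by ring
  -- chain p → y
  obtain ⟨T', hT', s1⟩ := basic_chainSeg hB hpB hyB δ hδ
  -- chain y → w : orbit then jump
  have s2 : ChainSeg f δ N y w := by
    have sorb : ChainSeg f δ (N - 1) y (f^[N-1] y) := chainSeg_orbit f (le_of_lt hδ) y (N-1)
    have sstep : ChainSeg f δ 1 (f^[N-1] y) w := by
      refine chainSeg_single ?_
      rw [← Function.iterate_succ_apply' f (N-1) y]
      show dist (f^[N-1+1] y) w ≤ δ
      have e : N - 1 + 1 = N := by omega
      rwa [e]
    have := sorb.concat sstep
    have e : N - 1 + 1 = N := by omega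
    rwa [e] at this
  obtain ⟨seg, hseg0, hsegT, hsegmid, hsegstep⟩ := s1.concat_mid s2
  -- orbits P and V
  set P := perOrbit f p πp with hPdef
  have hPorb : FullOrbit f P := perOrbit_fullOrbit hπp hperp
  have hPB : ∀ m : ℤ, P m ∈ B := fun m => basic_iterate hf hB hpB _
  have hP0 : P 0 = p := by
    have := perOrbit_natCast hπp hperp 0
    simpa using this
  obtain ⟨V, hVorb, hVfwd⟩ := exists_fullOrbit hsurj w
  have hVB : ∀ n : ℕ, V (n:ℤ) ∈ B := fun n => by rw [hVfwd n]; exact basic_iterate hf hB hwB n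
  have hV0 : V 0 = w := by
    have := hVfwd 0
    simpa using this
  -- apply master
  obtain ⟨z, hzorb, hmid, hfwd, hbwd, hmem⟩ :=
    hmaster P V (T' + N) seg hPorb hVorb hPB hVB (by omega)
      (by rw [hseg0, hP0]) (by rw [hsegT, hV0]) hsegstep
  -- the candidate point
  refine ⟨z (T' : ℤ), ⟨?_, hmem _⟩, ?_⟩
  · -- z T' ∈ Ws f p
    show Tendsto (fun n : ℕ => dist (f^[n] p) (f^[n] (z (T':ℤ)))) atTop (𝓝 0)
    have hzit : ∀ n : ℕ, f^[n] (z (T':ℤ)) = z ((T':ℤ) + n) := fun n =>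
      (hzorb.apply_iterate (T':ℤ) n).symm
    -- two tendsto pieces
    have hA : Tendsto (fun k : ℕ => dist (f^[k] p) (f^[k] w)) atTop (𝓝 0) := hwWs
    have hBt : Tendsto (fun k : ℕ => dist (z (((T' + N : ℕ):ℤ) + (k:ℤ))) (V (k:ℤ))) atTop (𝓝 0) :=
      hfwd
    have hsum : Tendsto (fun k : ℕ => dist (f^[k] p) (f^[k] w)
        + dist (z (((T' + N : ℕ):ℤ) + (k:ℤ))) (V (k:ℤ))) atTop (𝓝 0) := by
      have := hA.add hBt
      simpa using this
    have hcomp : Tendsto (fun n : ℕ => dist (f^[n - N] p) (f^[n - N] w)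
        + dist (z (((T' + N : ℕ):ℤ) + ((n - N : ℕ):ℤ))) (V ((n - N : ℕ):ℤ))) atTop (𝓝 0) :=
      hsum.comp (tendsto_sub_atTop_nat N)
    refine squeeze_zero' (Eventually.of_forall (fun n => dist_nonneg)) ?_ hcomp
    rw [eventually_atTop]
    refine ⟨N, fun n hn => ?_⟩
    have e1 : f^[n] p = f^[n - N] p := by
      conv_lhs => rw [show n = (n - N) + N by omega]
      rw [Function.iterate_add_apply]
      congr 1
      obtain ⟨k, hk⟩ := hNp
      rw [hk]
      exact Function.IsPeriodicPt.mul_const hperp k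
    calc dist (f^[n] p) (f^[n] (z (T':ℤ)))
        ≤ dist (f^[n] p) (f^[n - N] w) + dist (f^[n - N] w) (f^[n] (z (T':ℤ))) :=
          dist_triangle _ _ _
      _ ≤ _ := by
          rw [e1]
          refine add_le_add le_rfl ?_
          rw [hzit n]
          have ez : (T':ℤ) + (n:ℤ) = ((T' + N : ℕ):ℤ) + ((n - N : ℕ):ℤ) := by push_cast; omega
          rw [ez, ← hVfwd (n - N), dist_comm]
  · -- distance to y
    have := hmid T' (by omega)
    rw [hsegmid] at this
    rw [dist_comm]
    calc dist (z (T':ℤ)) y ≤ ε/2 := this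
      _ < ε := by linarith

end Aux7
section Aux8

set_option linter.unusedSectionVars false

open Filter Topology Function

variable {X : Type*} [MetricSpace X] [CompactSpace X] {f : X → X} {B : Set X} {c : ℝ}

lemma exists_good_s (πp πq Tc S : ℕ) (hπp : 0 < πp) (hπq : 0 < πq)
    (hdvd : Nat.gcd πp πq ∣ Tc) : ∃ s : ℕ, S ≤ s ∧ πp ∣ s ∧ πq ∣ (s + Tc) := by
  set G := Nat.gcd πp πq with hG
  set e : ℤ := ((Tc / G : ℕ) : ℤ) with he
  have hTc : (G:ℤ) * e = (Tc:ℤ) := by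
    rw [he]
    have h := Nat.mul_div_cancel' hdvd
    exact_mod_cast h
  set A := Nat.gcdA πp πq with hA
  set Bz := Nat.gcdB πp πq with hBz
  have hbez : (G:ℤ) = πp * A + πq * Bz := Nat.gcd_eq_gcd_ab πp πq
  set t : ℤ := (-(A * e)) % (πq:ℤ) with ht
  have ht0 : 0 ≤ t := Int.emod_nonneg _ (by exact_mod_cast hπq.ne')
  set d : ℤ := (-(A * e)) / (πq:ℤ) with hd
  have htd : t = -(A * e) - (πq:ℤ) * d := by rw [ht, hd, Int.emod_def]
  set s₀ : ℤ := πp * (t + πq * S) with hs₀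
  have h1 : (1:ℤ) ≤ πp := by exact_mod_cast hπp
  have h2 : (1:ℤ) ≤ πq := by exact_mod_cast hπq
  have h3 : (0:ℤ) ≤ (S:ℤ) := by positivity
  have h5 : (0:ℤ) ≤ t + πq * S := add_nonneg ht0 (by positivity)
  have hs₀0 : 0 ≤ s₀ := by
    rw [hs₀]
    exact mul_nonneg (by positivity) h5
  have hSle : (S:ℤ) ≤ s₀ := by
    have h4 : (S:ℤ) ≤ t + πq * S := by nlinarith
    calc (S:ℤ) ≤ t + πq * S := h4
      _ ≤ πp * (t + πq * S) := le_mul_of_one_le_left h5 h1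
      _ = s₀ := by rw [hs₀]
  have hdp : (πp:ℤ) ∣ s₀ := Dvd.intro _ rfl
  have hdq : (πq:ℤ) ∣ s₀ + Tc := by
    refine ⟨Bz * e - πp * d + πp * S, ?_⟩
    have hpA : (πp:ℤ) * A = G - πq * Bz := by linarith [hbez]
    calc s₀ + (Tc:ℤ) = πp * (t + πq * S) + G * e := by rw [hTc]
      _ = πp * (-(A * e) - (πq:ℤ) * d + πq * S) + G * e := by rw [htd]
      _ = -(πp * A) * e - πp * πq * d + πp * πq * S + G * e := by ring
      _ = -((G:ℤ) - πq * Bz) * e - πp * πq * d + πp * πq * S + G * e := by rw [hpA]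
      _ = (πq:ℤ) * (Bz * e - πp * d + πp * S) := by ring
  refine ⟨s₀.toNat, ?_, ?_, ?_⟩
  · exact_mod_cast (Int.toNat_of_nonneg hs₀0) ▸ hSle
  · have : (πp:ℤ) ∣ (s₀.toNat : ℤ) := by rwa [Int.toNat_of_nonneg hs₀0]
    exact_mod_cast this
  · have : (πq:ℤ) ∣ ((s₀.toNat : ℤ) + Tc) := by rwa [Int.toNat_of_nonneg hs₀0]
    exact_mod_cast this

/-- generalized: perOrbit at multiples of the period equals the point -/
lemma perOrbit_dvd {f : X → X} {p : X} {π : ℕ} (hπ : 0 < π)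
    (hper : Function.IsPeriodicPt f π p) (m : ℤ) (hm : (π:ℤ) ∣ m) :
    perOrbit f p π m = p := by
  unfold perOrbit
  have e : m % (π:ℤ) = 0 := Int.emod_eq_zero_of_dvd hm
  rw [e]
  simp

/-- Main Lemma 2: p lies in the closure of the stable set of q inside B. -/
lemma main2 (hf : Continuous f) (hsurj : Function.Surjective f) (hB : IsBasicSet f B)
    (hc : 0 < c) (hexp : BiAsympCExpWith f c) (hsh : Shadowing f)
    {p q : X} (hp : p ∈ Function.periodicPts f) (hpB : p ∈ B)
    (hq : q ∈ Function.periodicPts f)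
    (hqC : q ∈ closure (Ws f p ∩ B)) :
    p ∈ closure (Ws f q ∩ B) := by
  obtain ⟨πp, hπp, hperp⟩ := hp
  obtain ⟨πq, hπq, hperq⟩ := hq
  have hqB : q ∈ B := by
    refine basic_limit hf hB (fun γ hγ => ?_)
    rw [Metric.mem_closure_iff] at hqC
    obtain ⟨b, hb, hbd⟩ := hqC γ hγ
    exact ⟨b, hb.2, le_of_lt hbd⟩
  rw [Metric.mem_closure_iff]
  intro ε hε
  obtain ⟨δ, hδ, hmaster⟩ := master hf hB hc hexp hsh (ε/2) (by linarith)
  obtain ⟨β, hβ, hub⟩ := unif_cont hf δ hδ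
  rw [Metric.mem_closure_iff] at hqC
  obtain ⟨w, ⟨hwWs, hwB⟩, hwq⟩ := hqC β hβ
  have hwq' : dist w q ≤ β := by rw [dist_comm]; exact le_of_lt hwq
  have hfwq : dist (f w) (f q) ≤ δ := hub _ _ hwq'
  have hfqw : dist (f q) (f w) ≤ δ := by rwa [dist_comm] at hfwq
  -- M₀ for w → p-orbit
  have hwWs' : Tendsto (fun n : ℕ => dist (f^[n] p) (f^[n] w)) atTop (𝓝 0) := hwWs
  obtain ⟨M₀, hM₀⟩ := le_of_tendsto_zero (fun n => dist_nonneg) hwWs' δ hδ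
  -- chain p → w
  obtain ⟨T₀, hT₀, s_pw⟩ := basic_chainSeg hB hpB hwB δ hδ
  -- chain w → q of length πq
  have s_wq : ChainSeg f δ πq w q := by
    have step1 : ChainSeg f δ 1 w (f q) := chainSeg_single hfwq
    have orb : ChainSeg f δ (πq - 1) (f q) (f^[πq - 1] (f q)) :=
      chainSeg_orbit f (le_of_lt hδ) (f q) (πq - 1)
    have e : f^[πq - 1] (f q) = q := by
      rw [← Function.iterate_succ_apply f (πq - 1) q]
      show f^[πq - 1 + 1] q = q
      have e2 : πq - 1 + 1 = πq := by omega
      rw [e2]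
      exact hperq
    rw [e] at orb
    have := step1.concat orb
    have e3 : 1 + (πq - 1) = πq := by omega
    rwa [e3] at this
  -- chain q → p of length divisible by πp
  set R := πp * (M₀ + 3) - (M₀ + 2) with hR
  set T₁ := M₀ + 2 + R with hT₁
  have hT₁dvd : πp ∣ T₁ := by
    refine ⟨M₀ + 3, ?_⟩
    have h1 : 1 ≤ πp := hπp
    have : M₀ + 2 ≤ πp * (M₀ + 3) := by nlinarith
    omega
  have s_qp : ChainSeg f δ T₁ q p := by
    have step1 : ChainSeg f δ 1 q (f w) := chainSeg_single hfqw
    have orb1 : ChainSeg f δ M₀ (f w) (f^[M₀] (f w)) :=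
      chainSeg_orbit f (le_of_lt hδ) (f w) M₀
    have e1 : f^[M₀] (f w) = f^[M₀ + 1] w := (Function.iterate_succ_apply f M₀ w).symm
    rw [e1] at orb1
    have step2 : ChainSeg f δ 1 (f^[M₀ + 1] w) (f^[M₀ + 2] p) := by
      refine chainSeg_single ?_
      rw [← Function.iterate_succ_apply' f (M₀ + 1) w]
      show dist (f^[M₀+1+1] w) (f^[M₀+2] p) ≤ δ
      have e2 : M₀ + 1 + 1 = M₀ + 2 := by omega
      rw [e2, dist_comm]
      exact hM₀ (M₀ + 2) (by omega)
    have orb2 : ChainSeg f δ R (f^[M₀ + 2] p) (f^[R] (f^[M₀ + 2] p)) :=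
      chainSeg_orbit f (le_of_lt hδ) _ R
    have e3 : f^[R] (f^[M₀ + 2] p) = p := by
      rw [← Function.iterate_add_apply]
      have e4 : R + (M₀ + 2) = πp * (M₀ + 3) := by
        have h1 : 1 ≤ πp := hπp
        have : M₀ + 2 ≤ πp * (M₀ + 3) := by nlinarith
        omega
      rw [e4]
      exact hperp.mul_const (M₀ + 3)
    rw [e3] at orb2
    have := ((step1.concat orb1).concat step2).concat orb2
    have e5 : 1 + M₀ + 1 + R = T₁ := by omega
    rwa [e5] at this
  -- the loop and the big chain
  set G := Nat.gcd πp πq with hG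
  have hGp : G ∣ πp := Nat.gcd_dvd_left _ _
  have hGq : G ∣ πq := Nat.gcd_dvd_right _ _
  set Λ := T₀ + πq + T₁ with hΛ
  have loop : ChainSeg f δ Λ p p := (s_pw.concat s_wq).concat s_qp
  set Tc := (G - 1) * Λ + T₀ with hTc
  have hTcdvd : G ∣ Tc := by
    have hG1 : 1 ≤ G := Nat.gcd_pos_of_pos_left πq hπp
    obtain ⟨g, hg⟩ : ∃ g, G = g + 1 := ⟨G - 1, by omega⟩
    have e : Tc = G * T₀ + (G - 1) * (πq + T₁) := by
      rw [hTc, hΛ, hg]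
      simp only [Nat.add_sub_cancel]
      ring
    rw [e]
    exact Nat.dvd_add (Dvd.intro _ rfl)
      ((Nat.dvd_add hGq (hGp.trans hT₁dvd)).mul_left _)
  -- the forward orbit V (shifted q-orbit)
  have hQorb : FullOrbit f (perOrbit f q πq) := perOrbit_fullOrbit hπq hperq
  set V : ℤ → X := fun m => perOrbit f q πq (m + 1) with hVdef
  have hVorb : FullOrbit f V := hQorb.shift 1
  have hVnat : ∀ n : ℕ, V (n:ℤ) = f^[n + 1] q := by
    intro n
    show perOrbit f q πq ((n:ℤ) + 1) = f^[n+1] q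
    have e : (n:ℤ) + 1 = ((n + 1 : ℕ):ℤ) := by push_cast; ring
    rw [e, perOrbit_natCast hπq hperq (n+1)]
  have hVB : ∀ n : ℕ, V (n:ℤ) ∈ B := by
    intro n
    rw [hVnat n]
    exact basic_iterate hf hB hqB _
  have hV0 : V 0 = f q := by
    have := hVnat 0
    simpa using this
  -- the whole chain p → V 0
  set T := Tc + 1 with hT
  have s_full : ChainSeg f δ T p (V 0) := by
    have sbig : ChainSeg f δ Tc p w := (loop.pow (G-1)).concat s_pw
    have sstep : ChainSeg f δ 1 w (V 0) := by
      rw [hV0]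
      exact chainSeg_single hfwq
    exact sbig.concat sstep
  obtain ⟨seg, hseg0, hsegT, hsegstep⟩ := s_full
  -- backward orbit P
  set P := perOrbit f p πp with hPdef
  have hPorb : FullOrbit f P := perOrbit_fullOrbit hπp hperp
  have hPB : ∀ m : ℤ, P m ∈ B := fun m => basic_iterate hf hB hpB _
  have hP0 : P 0 = p := by
    have := perOrbit_natCast hπp hperp 0
    simpa using this
  -- apply master
  obtain ⟨z, hzorb, hmid, hfwd, hbwd, hmem⟩ :=
    hmaster P V T seg hPorb hVorb hPB hVB (by omega)
      (by rw [hseg0, hP0]) (by rw [hsegT]) hsegstep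
  -- choose s
  obtain ⟨N₁, hN₁⟩ := le_of_tendsto_zero (fun n => dist_nonneg) hbwd (ε/2) (by linarith)
  obtain ⟨s, hsN, hsp, hsq⟩ := exists_good_s πp πq Tc N₁ hπp hπq hTcdvd
  -- candidate
  refine ⟨z (-(s:ℤ)), ⟨?_, hmem _⟩, ?_⟩
  · -- z (-s) ∈ Ws f q
    show Tendsto (fun n : ℕ => dist (f^[n] q) (f^[n] (z (-(s:ℤ))))) atTop (𝓝 0)
    have hcomp : Tendsto (fun n : ℕ =>
        dist (z ((T:ℤ) + ((n - (s + T) : ℕ):ℤ))) (V ((n - (s + T) : ℕ):ℤ))) atTop (𝓝 0) :=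
      hfwd.comp (tendsto_sub_atTop_nat (s + T))
    refine squeeze_zero' (Eventually.of_forall (fun n => dist_nonneg)) ?_ hcomp
    rw [eventually_atTop]
    refine ⟨s + T, fun n hn => ?_⟩
    set k := n - (s + T) with hk
    have hnk : n = k + 1 + (s + Tc) := by omega
    have e1 : f^[n] q = f^[k+1] q := by
      conv_lhs => rw [hnk]
      rw [Function.iterate_add_apply]
      congr 1
      obtain ⟨j, hj⟩ := hsq
      rw [hj]
      exact hperq.mul_const j
    have e2 : f^[n] (z (-(s:ℤ))) = z ((T:ℤ) + (k:ℤ)) := by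
      rw [← hzorb.apply_iterate (-(s:ℤ)) n]
      congr 1
      push_cast
      omega
    rw [e1, e2, ← hVnat k, dist_comm]
  · -- distance to p
    have hb := hN₁ s hsN
    have hPs : P (-(s:ℤ)) = p := by
      refine perOrbit_dvd hπp hperp _ ?_
      exact Dvd.dvd.neg_right (by exact_mod_cast hsp)
    rw [hPs] at hb
    rw [dist_comm] at hb
    calc dist p (z (-(s:ℤ))) ≤ ε/2 := hb
      _ < ε := by linarith

end Aux8
/-- If `q` is a periodic point in `C_p = closure (W^s(p) ∩ B)`, then `C_p = C_q`. -/
theorem cp_eq_cq_of_mem {X : Type*} [MetricSpace X] [CompactSpace X]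
    (f : X → X) (hf : Continuous f) (hsurj : Function.Surjective f)
    (hexp : BiAsympCExpansive f) (hsh : Shadowing f)
    (B : Set X) (hB : IsBasicSet f B)
    (p : X) (hp : p ∈ Function.periodicPts f) (hpB : p ∈ B)
    (q : X) (hq : q ∈ Function.periodicPts f) (hqC : q ∈ closure (Ws f p ∩ B)) :
    closure (Ws f p ∩ B) = closure (Ws f q ∩ B) := by
  obtain ⟨c, hc, hexpw⟩ := hexp
  have hqB : q ∈ B := by
    refine basic_limit hf hB (fun γ hγ => ?_)
    rw [Metric.mem_closure_iff] at hqC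
    obtain ⟨b, hb, hbd⟩ := hqC γ hγ
    exact ⟨b, hb.2, le_of_lt hbd⟩
  have h1 : Ws f q ∩ B ⊆ closure (Ws f p ∩ B) :=
    main1 hf hsurj hB hc hexpw hsh hp hpB hq hqC
  have h2 : p ∈ closure (Ws f q ∩ B) :=
    main2 hf hsurj hB hc hexpw hsh hp hpB hq hqC
  have h3 : Ws f p ∩ B ⊆ closure (Ws f q ∩ B) :=
    main1 hf hsurj hB hc hexpw hsh hq hqB hp h2
  exact Set.Subset.antisymm (closure_minimal h3 isClosed_closure)
    (closure_minimal h1 isClosed_closure)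
end

section
/- Let f: X → X be a bi-asymptotically c-expansive continuous surjection of a compact metric space with the shadowing property, B a basic set, and p ∈ Per(f) ∩ B. Then there exists m ∈ ℕ⁺ such that B = ⋃_{i=0}^{m-1} C_{fⁱ(p)}, the sets C_{fⁱ(p)} are pairwise disjoint, f(C_{fⁱ(p)}) = C_{f^{i+1}(p)}, f^m(C_{fⁱ(p)}) = C_{fⁱ(p)}, and f^m restricted to each C_{fⁱ(p)} is topologically mixing. -/
open Filter Topology Function

set_option linter.unusedSectionVars false
set_option maxHeartbeats 1000000

namespace SD
variable {X : Type*} [MetricSpace X] {f : X → X}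

/-- pseudo-orbit jump bound up to time `L`. -/
def PJ (f : X → X) (α : ℝ) (L : ℕ) (z : ℕ → X) : Prop :=
  ∀ i, i < L → dist (f (z i)) (z (i + 1)) ≤ α

lemma PJ.mono {α β : ℝ} {L : ℕ} {z : ℕ → X} (h : PJ f α L z) (hαβ : α ≤ β) : PJ f β L z :=
  fun i hi => (h i hi).trans hαβ

lemma PJ.of_le {α : ℝ} {L L' : ℕ} {z : ℕ → X} (h : PJ f α L z) (hL : L' ≤ L) : PJ f α L' z :=
  fun i hi => h i (hi.trans_le hL)

def app (z1 : ℕ → X) (L : ℕ) (z2 : ℕ → X) : ℕ → X :=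
  fun n => if n < L then z1 n else z2 (n - L)

lemma app_lt {z1 z2 : ℕ → X} {L n : ℕ} (h : n < L) : app z1 L z2 n = z1 n := if_pos h

lemma app_ge {z1 z2 : ℕ → X} {L n : ℕ} (h : L ≤ n) : app z1 L z2 n = z2 (n - L) :=
  if_neg (not_lt.2 h)

lemma app_add {z1 z2 : ℕ → X} (L s : ℕ) : app z1 L z2 (L + s) = z2 s := by
  rw [app_ge (Nat.le_add_right _ _)]; congr 1; omega

lemma app_left_of_glue {z1 z2 : ℕ → X} {L : ℕ} (hglue : z1 L = z2 0) {n : ℕ} (h : n ≤ L) :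
    app z1 L z2 n = z1 n := by
  rcases lt_or_eq_of_le h with h | h
  · exact app_lt h
  · subst h; rw [app_ge le_rfl, Nat.sub_self, ← hglue]

lemma PJ.app {α : ℝ} {z1 z2 : ℕ → X} {L L' : ℕ} (h1 : PJ f α L z1) (hglue : z1 L = z2 0)
    (h2 : PJ f α L' z2) : PJ f α (L + L') (SD.app z1 L z2) := by
  intro i hi
  rcases lt_or_ge i L with h | h
  · rw [app_lt h, app_left_of_glue hglue h]
    exact h1 i h
  · obtain ⟨s, rfl⟩ : ∃ s, i = L + s := ⟨i - L, by omega⟩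
    rw [app_add, show L + s + 1 = L + (s + 1) by omega, app_add]
    exact h2 s (by omega)

/-- follow the orbit of `x` for `L` steps, then sit at `q`. -/
def orbTo (f : X → X) (x q : X) (L : ℕ) : ℕ → X := fun n => if n < L then f^[n] x else q

lemma orbTo_zero {x q : X} {L : ℕ} (h : 0 < L) : orbTo f x q L 0 = x := by
  simp [orbTo, h]

lemma orbTo_last {x q : X} (L : ℕ) : orbTo f x q L L = q := by simp [orbTo]

lemma pj_orbTo {α : ℝ} (hα : 0 ≤ α) {x q : X} {L : ℕ} (h : dist (f^[L] x) q ≤ α) :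
    PJ f α L (orbTo f x q L) := by
  intro i hi
  rcases lt_or_ge (i + 1) L with h2 | h2
  · have : orbTo f x q L i = f^[i] x := if_pos hi
    rw [this, show orbTo f x q L (i+1) = f^[i+1] x from if_pos h2,
      ← Function.iterate_succ_apply' f i x]
    simp [hα]
  · have hL : i + 1 = L := by omega
    have : orbTo f x q L i = f^[i] x := if_pos hi
    rw [this, show orbTo f x q L (i+1) = q by simp [orbTo, hL], ← Function.iterate_succ_apply' f i x,
      show i.succ = L from hL]
    exact h

section WsLemmas

lemma ws_mem_iff {x y : X} : y ∈ Ws f x ↔ Tendsto (fun n : ℕ => dist (f^[n] x) (f^[n] y)) atTop (𝓝 0) := Iff.rfl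

lemma ws_refl (x : X) : x ∈ Ws f x := by
  simp [Ws, tendsto_const_nhds]

lemma ws_symm {x y : X} (h : y ∈ Ws f x) : x ∈ Ws f y := by
  rw [ws_mem_iff] at *
  exact h.congr fun n => dist_comm _ _

lemma ws_trans {x y z : X} (hxy : y ∈ Ws f x) (hyz : z ∈ Ws f y) : z ∈ Ws f x := by
  rw [ws_mem_iff] at *
  have h := hxy.add hyz
  rw [add_zero] at h
  apply squeeze_zero (fun n => dist_nonneg) (fun n => ?_) h
  exact dist_triangle _ _ _

lemma ws_iterate {x y : X} (j : ℕ) (h : y ∈ Ws f x) : f^[j] y ∈ Ws f (f^[j] x) := by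
  rw [ws_mem_iff] at *
  have := h.comp (tendsto_add_atTop_nat j)
  apply this.congr
  intro n
  simp [Function.comp, ← Function.iterate_add_apply, Nat.add_comm j n]

lemma ws_pull {w q x' : X} (T : ℕ) (h : f^[T] w ∈ Ws f q) (hx : f^[T] x' = q) : w ∈ Ws f x' := by
  rw [ws_mem_iff] at *
  have h2 := h.comp (tendsto_sub_atTop_nat T)
  apply h2.congr' ?_
  filter_upwards [eventually_ge_atTop T] with n hn
  simp only [Function.comp]
  rw [← hx, ← Function.iterate_add_apply, ← Function.iterate_add_apply]
  congr 2 <;> omega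

end WsLemmas

section IterPeriodic
variable {p : X} {k : ℕ}

lemma iter_mul_periodic (hk : f^[k] p = p) : ∀ j, f^[j * k] p = p := by
  intro j
  induction j with
  | zero => simp
  | succ j ih => rw [Nat.succ_mul, Function.iterate_add_apply, hk, ih]

lemma iter_congr (hk : f^[k] p = p) {a b : ℕ} (h : a ≡ b [MOD k]) : f^[a] p = f^[b] p := by
  rcases le_total a b with hab | hab
  · obtain ⟨j, rfl⟩ : ∃ j, b = a + j * k := by
      have := (Nat.modEq_iff_dvd' hab).1 h
      obtain ⟨j, hj⟩ := this
      exact ⟨j, by rw [mul_comm]; omega⟩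
    rw [Function.iterate_add_apply, iter_mul_periodic hk]
  · obtain ⟨j, rfl⟩ : ∃ j, a = b + j * k := by
      have := (Nat.modEq_iff_dvd' hab).1 h.symm
      obtain ⟨j, hj⟩ := this
      exact ⟨j, by rw [mul_comm]; omega⟩
    rw [Function.iterate_add_apply, iter_mul_periodic hk]

end IterPeriodic

section FullOrbitLemmas

lemma fullorbit_forward {o : ℤ → X} (ho : FullOrbit f o) : ∀ n : ℕ, o n = f^[n] (o 0) := by
  intro n
  induction n with
  | zero => simp
  | succ n ih =>
    have hc : ((n+1 : ℕ) : ℤ) = (n : ℤ) + 1 := by push_cast; ring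
    rw [Function.iterate_succ_apply', ← ih, hc, ← ho n]

lemma exists_fullorbit (hsurj : Function.Surjective f) (x : X) :
    ∃ o : ℤ → X, FullOrbit f o ∧ o 0 = x ∧ (∀ n : ℕ, o n = f^[n] x) := by
  obtain ⟨g, hg⟩ := hsurj.hasRightInverse
  refine ⟨fun t => if 0 ≤ t then f^[t.toNat] x else g^[(-t).toNat] x, ?_, by simp, ?_⟩
  · intro t
    dsimp only
    rcases le_or_gt 0 t with ht | ht
    · rw [if_pos ht, if_pos (by omega)]
      rw [show (t+1).toNat = t.toNat + 1 by omega, Function.iterate_succ_apply']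
    · rcases eq_or_lt_of_le (show t ≤ -1 by omega) with ht1 | ht1
      · rw [if_neg (by omega), if_pos (by omega)]
        rw [show t = -1 from ht1]
        simpa using hg x
      · rw [if_neg (by omega), if_neg (by omega)]
        have h1 : (-t).toNat = (-(t+1)).toNat + 1 := by omega
        rw [h1, Function.iterate_succ_apply']
        exact hg _
  · intro n; simp

end FullOrbitLemmas

section Chains
variable {f : X → X}

lemma chainrel_iff {α : ℝ} {x y : X} :
    ChainRel f α x y ↔ ∃ L, 0 < L ∧ ∃ z : ℕ → X, z 0 = x ∧ z L = y ∧ PJ f α L z := by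
  constructor
  · rintro ⟨n, z, hn, h0, hL, hj⟩; exact ⟨n, hn, z, h0, hL, hj⟩
  · rintro ⟨L, hL, z, h0, hend, hj⟩; exact ⟨L, z, hL, h0, hend, hj⟩

lemma chain_of_pj {α : ℝ} {x y : X} {L : ℕ} {z : ℕ → X} (hL : 0 < L) (h0 : z 0 = x)
    (hend : z L = y) (hj : PJ f α L z) : ChainRel f α x y :=
  chainrel_iff.2 ⟨L, hL, z, h0, hend, hj⟩

lemma chain_mono {α β : ℝ} {x y : X} (h : ChainRel f α x y) (hαβ : α ≤ β) : ChainRel f β x y := by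
  obtain ⟨n, z, hn, h0, hL, hj⟩ := h
  exact ⟨n, z, hn, h0, hL, fun i hi => (hj i hi).trans hαβ⟩

lemma chain_concat {α : ℝ} {x y w : X} (h1 : ChainRel f α x y) (h2 : ChainRel f α y w) :
    ChainRel f α x w := by
  obtain ⟨L1, z1, hL1, h01, he1, hj1⟩ := h1
  obtain ⟨L2, z2, hL2, h02, he2, hj2⟩ := h2
  refine chain_of_pj (L := L1 + L2) (z := app z1 L1 z2) (by omega) ?_ ?_ (PJ.app hj1 (by rw [he1, h02]) hj2)
  · rw [app_lt hL1, h01]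
  · rw [app_add, he2]

lemma chain_single {α : ℝ} {x y : X} (h : dist (f x) y ≤ α) : ChainRel f α x y := by
  refine ⟨1, fun n => if n = 0 then x else y, one_pos, by simp, by simp, ?_⟩
  intro i hi
  have : i = 0 := by omega
  simp [this, h]

lemma chain_step {α : ℝ} (hα : 0 ≤ α) (x : X) : ChainRel f α x (f x) :=
  chain_single (by simp [hα])

lemma chain_orbit {α : ℝ} (hα : 0 ≤ α) {x q : X} {L : ℕ} (hL : 0 < L)
    (h : dist (f^[L] x) q ≤ α) : ChainRel f α x q :=
  chain_of_pj hL (orbTo_zero hL) (orbTo_last L) (pj_orbTo hα h)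

lemma chain_last_perturb {α β : ℝ} {x y y' : X} (h : ChainRel f α x y) (hd : dist y y' ≤ β) :
    ChainRel f (α + β) x y' := by
  obtain ⟨L, z, hL, h0, hend, hj⟩ := h
  have hβ0 : 0 ≤ β := le_trans dist_nonneg hd
  refine chain_of_pj (L := L) (z := fun n => if n = L then y' else z n) hL ?_ ?_ ?_
  · rw [if_neg (by omega : ¬ (0:ℕ) = L)]; exact h0
  · rw [if_pos rfl]
  · intro i hi
    dsimp only
    rw [if_neg (by omega : ¬ i = L)]
    by_cases h2 : i + 1 = L
    · rw [if_pos h2]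
      have h3 := hj i hi
      rw [h2, hend] at h3
      calc dist (f (z i)) y' ≤ dist (f (z i)) y + dist y y' := dist_triangle _ _ _
        _ ≤ α + β := add_le_add h3 hd
    · rw [if_neg h2]
      exact (hj i hi).trans (by linarith)

lemma chain_first_perturb {α β : ℝ} {x x' y : X} (h : ChainRel f α x y)
    (hd : dist (f x') (f x) ≤ β) : ChainRel f (α + β) x' y := by
  obtain ⟨L, z, hL, h0, hend, hj⟩ := h
  have hβ0 : 0 ≤ β := le_trans dist_nonneg hd
  refine chain_of_pj (L := L) (z := fun n => if n = 0 then x' else z n) hL ?_ ?_ ?_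
  · rw [if_pos rfl]
  · rw [if_neg (by omega : ¬ L = 0)]; exact hend
  · intro i hi
    dsimp only
    rw [if_neg (by omega : ¬ i + 1 = 0)]
    by_cases h2 : i = 0
    · subst h2; rw [if_pos rfl]
      calc dist (f x') (z 1) ≤ dist (f x') (f x) + dist (f x) (z 1) := dist_triangle _ _ _
        _ ≤ β + α := add_le_add hd (by rw [← h0]; exact hj 0 hL)
        _ = α + β := by ring
    · rw [if_neg h2]; exact (hj i hi).trans (by linarith)

lemma chain_fimage {α β : ℝ} {x y : X} (h : ChainRel f β x y)
    (hmod : ∀ a b : X, dist a b ≤ β → dist (f a) (f b) ≤ α) :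
    ChainRel f α (f x) (f y) := by
  obtain ⟨L, z, hL, h0, hend, hj⟩ := h
  exact chain_of_pj (z := fun n => f (z n)) hL (show f (z 0) = f x by rw [h0])
    (show f (z L) = f y by rw [hend]) (fun i hi => hmod _ _ (hj i hi))

lemma chain_dropfirst_aux {β γ : ℝ} (hβ : 0 ≤ β) {x y : X} {L : ℕ} {z : ℕ → X}
    (hL : 2 ≤ L) (h0 : z 0 = x) (hend : z L = y) (hj : PJ f β L z)
    (hmod : ∀ a b : X, dist a b ≤ β → dist (f a) (f b) ≤ γ) :
    ChainRel f (γ + β) (f x) y := by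
  have hγ : 0 ≤ γ := le_trans dist_nonneg (hmod x x (by simp [hβ]))
  refine chain_of_pj (L := L - 1) (z := fun j => if j = 0 then f x else z (j + 1))
    (by omega) (by simp)
    (by rw [if_neg (by omega : ¬ L - 1 = 0), show L - 1 + 1 = L by omega, hend]) ?_
  intro i hi
  dsimp only
  by_cases hi0 : i = 0
  · subst hi0
    rw [if_pos rfl, if_neg (by omega : ¬ (0:ℕ) + 1 = 0)]
    have h1 : dist (f x) (z 1) ≤ β := by rw [← h0]; exact hj 0 (by omega)
    calc dist (f (f x)) (z 2) ≤ dist (f (f x)) (f (z 1)) + dist (f (z 1)) (z 2) := dist_triangle _ _ _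
    _ ≤ γ + β := add_le_add (hmod _ _ h1) (hj 1 (by omega))
  · rw [if_neg hi0, if_neg (by omega : ¬ i + 1 = 0)]
    exact (hj (i + 1) (by omega)).trans (by linarith)

lemma chain_dropfirst {β γ : ℝ} (hβ : 0 ≤ β) {x y : X} (h : ChainRel f β x y)
    (hyy : ChainRel f β y y)
    (hmod : ∀ a b : X, dist a b ≤ β → dist (f a) (f b) ≤ γ) :
    ChainRel f (γ + β) (f x) y := by
  obtain ⟨L1, z1, hL1, h01, he1, hj1⟩ := h
  obtain ⟨L2, z2, hL2, h02, he2, hj2⟩ := hyy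
  have happ : PJ f β (L1 + L2) (app z1 L1 z2) := PJ.app hj1 (by rw [he1, h02]) hj2
  exact chain_dropfirst_aux hβ (by omega) (by rw [app_lt hL1, h01]) (by rw [app_add, he2]) happ hmod

end Chains

section BFacts
variable [CompactSpace X] {f : X → X} {B : Set X}

lemma unif_mod (hf : Continuous f) {α : ℝ} (hα : 0 < α) :
    ∃ β > 0, β ≤ α ∧ ∀ a b : X, dist a b ≤ β → dist (f a) (f b) ≤ α := by
  have hu : UniformContinuous f := CompactSpace.uniformContinuous_of_continuous hf
  rw [Metric.uniformContinuous_iff] at hu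
  obtain ⟨δ, hδ, h⟩ := hu α hα
  refine ⟨min (δ/2) α, by positivity, min_le_right _ _, fun a b hab => ?_⟩
  exact le_of_lt (h (lt_of_le_of_lt (hab.trans (min_le_left _ _)) (by linarith)))

variable {x0 : X} (hx0 : ChainRecurrent f x0)
  (hBeq : B = {y | ChainRecurrent f y ∧ ChainEquiv f x0 y})

include hBeq in
lemma chainB {y z : X} (hy : y ∈ B) (hz : z ∈ B) : ∀ α > 0, ChainRel f α y z := by
  intro α hα
  rw [hBeq] at hy hz
  have h1 : ChainRel f α y x0 := (hy.2 α hα).2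
  have h2 : ChainRel f α x0 z := (hz.2 α hα).1
  exact chain_concat h1 h2

include hBeq in
lemma memB_of_chains {p v : X} (hpB : p ∈ B) (h1 : ∀ α > 0, ChainRel f α p v)
    (h2 : ∀ α > 0, ChainRel f α v p) : v ∈ B := by
  rw [hBeq] at hpB ⊢
  refine ⟨fun α hα => chain_concat (h2 α hα) (h1 α hα), fun α hα => ?_⟩
  have hp1 : ChainRel f α x0 p := (hpB.2 α hα).1
  have hp2 : ChainRel f α p x0 := (hpB.2 α hα).2
  exact ⟨chain_concat hp1 (h1 α hα), chain_concat (h2 α hα) hp2⟩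

include hBeq hx0 in
lemma fB_mem (hf : Continuous f) {y : X} (hy : y ∈ B) : f y ∈ B := by
  have hyB := hy
  rw [hBeq] at hy
  rw [hBeq]
  have key : ∀ α > 0, ChainRel f α (f y) (f y) ∧ ChainRel f α x0 (f y) ∧ ChainRel f α (f y) x0 := by
    intro α hα
    obtain ⟨β, hβ, hβα, hmod⟩ := unif_mod hf (show (0:ℝ) < α/2 by linarith)
    have hcr : ChainRel f α (f y) (f y) := by
      have := chain_fimage (hy.1 β hβ) hmod
      exact chain_mono this (by linarith)
    have hto : ChainRel f α x0 (f y) := by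
      have h1 : ChainRel f α x0 y := chain_mono (hy.2 α hα).1 le_rfl
      exact chain_concat h1 (chain_step (le_of_lt hα) y)
    have hfrom : ChainRel f α (f y) x0 := by
      have h1 : ChainRel f β y x0 := (hy.2 β hβ).2
      have h2 : ChainRel f β x0 x0 := hx0 β hβ
      have := chain_dropfirst (le_of_lt hβ) h1 h2 hmod
      exact chain_mono this (by linarith)
    exact ⟨hcr, hto, hfrom⟩
  exact ⟨fun α hα => (key α hα).1, fun α hα => ⟨(key α hα).2.1, (key α hα).2.2⟩⟩

include hBeq hx0 in
lemma iterB_mem (hf : Continuous f) {y : X} (hy : y ∈ B) : ∀ n, f^[n] y ∈ B := by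
  intro n
  induction n with
  | zero => simpa using hy
  | succ n ih => rw [Function.iterate_succ_apply']; exact fB_mem hx0 hBeq hf ih

include hBeq hx0 in
lemma B_closed (hf : Continuous f) {p : X} (hpB : p ∈ B) : IsClosed B := by
  refine isClosed_of_closure_subset fun y hy => ?_
  rw [Metric.mem_closure_iff] at hy
  refine memB_of_chains hBeq hpB ?_ ?_
  · intro α hα
    obtain ⟨yβ, hyβ, hd⟩ := hy (α/2) (by linarith)
    have h1 : ChainRel f (α/2) p yβ := chainB hBeq hpB hyβ (α/2) (by linarith)
    have hd' : dist yβ y ≤ α/2 := by rw [dist_comm]; exact le_of_lt hd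
    exact chain_mono (chain_last_perturb h1 hd') (by linarith)
  · intro α hα
    obtain ⟨β, hβ, hβα, hmod⟩ := unif_mod hf (show (0:ℝ) < α/2 by linarith)
    obtain ⟨yβ, hyβ, hd⟩ := hy β hβ
    have h1 : ChainRel f (α/2) yβ p := chain_mono (chainB hBeq hyβ hpB β hβ) (by linarith)
    have := chain_first_perturb h1 (hmod _ _ (le_of_lt hd))
    exact chain_mono this (by linarith)

end BFacts

section Expansive
variable [CompactSpace X] {f : X → X} {c : ℝ}

lemma lim_dist_le {A : ℕ → X} {a b : X} {ε : ℝ} (ha : Tendsto A atTop (𝓝 a))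
    (h : ∀ l, dist (A l) b ≤ ε) : dist a b ≤ ε :=
  le_of_tendsto (ha.dist tendsto_const_nhds) (Eventually.of_forall h)

lemma asymp_forward (hsurj : Function.Surjective f) (hexp : BiAsympCExpWith f c)
    {x y : X} (h : ∀ n : ℕ, dist (f^[n] x) (f^[n] y) ≤ c) :
    Tendsto (fun n : ℕ => dist (f^[n] x) (f^[n] y)) atTop (𝓝 0) := by
  obtain ⟨ox, hox, hox0, hoxn⟩ := exists_fullorbit hsurj x
  obtain ⟨oy, hoy, hoy0, hoyn⟩ := exists_fullorbit hsurj y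
  have := hexp.1 ox oy hox hoy (fun n => by rw [hoxn n, hoyn n]; exact h n)
  exact this.congr (fun n => by rw [hoxn n, hoyn n])

lemma ws_of_tail (hsurj : Function.Surjective f) (hexp : BiAsympCExpWith f c)
    {w q : X} {T : ℕ} (h : ∀ s : ℕ, dist (f^[T + s] w) (f^[s] q) ≤ c) :
    f^[T] w ∈ Ws f q := by
  rw [ws_mem_iff]
  have hb : ∀ n : ℕ, dist (f^[n] q) (f^[n] (f^[T] w)) ≤ c := by
    intro n
    rw [← Function.iterate_add_apply, dist_comm, Nat.add_comm n T]
    exact h n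
  exact asymp_forward hsurj hexp hb

lemma modeq_add_mul (b j k : ℕ) : b + j * k ≡ b [MOD k] := by
  unfold Nat.ModEq
  rw [Nat.add_mul_mod_self_right]

lemma pick_aligned {k : ℕ} (hk0 : 0 < k) {g : ℕ → ℝ} (hg : Tendsto g atTop (𝓝 0)) {α : ℝ}
    (hα : 0 < α) (ψ N : ℕ) : ∃ n, N ≤ n ∧ 1 ≤ n ∧ (n + ψ) ≡ 0 [MOD k] ∧ g n ≤ α := by
  obtain ⟨N0, hN0⟩ := (Metric.tendsto_atTop).1 hg α hα
  set n := ψ * (k - 1) + (N0 + N + 1) * k with hn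
  have hnk : N0 + N + 1 ≤ (N0 + N + 1) * k := Nat.le_mul_of_pos_right _ hk0
  have h1 : N ≤ n := by rw [hn]; omega
  have h2 : 1 ≤ n := by rw [hn]; omega
  have h3 : (n + ψ) ≡ 0 [MOD k] := by
    have : n + ψ = ψ * k + (N0 + N + 1) * k := by
      rw [hn]
      have : ψ * (k - 1) + ψ = ψ * k := by
        cases k with
        | zero => omega
        | succ k' => rw [Nat.succ_sub_one, Nat.mul_succ]
      omega
    rw [this]
    calc ψ * k + (N0 + N + 1) * k ≡ 0 + (N0+N+1) * k [MOD k] := by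
          have := modeq_add_mul 0 ψ k
          simpa using (Nat.ModEq.add_right ((N0+N+1)*k) this)
    _ ≡ 0 [MOD k] := by simpa using modeq_add_mul 0 (N0+N+1) k
  refine ⟨n, h1, h2, h3, ?_⟩
  have := hN0 n (by omega)
  rw [Real.dist_eq, sub_zero] at this
  exact (le_abs_self _).trans this.le

end Expansive

section Workhorse
variable [CompactSpace X] {f : X → X} {B : Set X} {c : ℝ} {p : X} {k : ℕ} {x0 : X}
variable (hf : Continuous f) (hsurj : Function.Surjective f) (hexp : BiAsympCExpWith f c)
  (hsh : Shadowing f) (hx0 : ChainRecurrent f x0)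
  (hBeq : B = {y | ChainRecurrent f y ∧ ChainEquiv f x0 y})
  (hpB : p ∈ B) (hk0 : 0 < k) (hk : f^[k] p = p)

include hf hsurj hexp hsh hx0 hBeq hpB hk0 hk in
lemma workhorse {ε : ℝ} (hε : 0 < ε) (hεc : ε ≤ c) :
    ∃ δ, 0 < δ ∧ δ ≤ ε ∧ ∀ (φ ψ T : ℕ) (q : X) (z : ℕ → X),
      1 ≤ T → z 0 = f^[φ] p → z T = q → PJ f δ T z → q ∈ Ws f (f^[ψ] p) →
      ∃ w, w ∈ B ∧ (∀ n, n ≤ T → dist (f^[n] w) (z n) ≤ ε) ∧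
        (∀ s : ℕ, dist (f^[T + s] w) (f^[s] q) ≤ ε) ∧ f^[T] w ∈ Ws f q ∧
        (∀ a : ℕ, (a + T) ≡ ψ [MOD k] → w ∈ Ws f (f^[a] p)) := by
  obtain ⟨δ0, hδ0, hshad⟩ := hsh ε hε
  refine ⟨min δ0 ε, by positivity, min_le_right _ _, ?_⟩
  intro φ ψ T q z hT h0 hTq hjump hqws
  set δ := min δ0 ε with hδdef
  -- the extended pseudo-orbit with exact tail
  set ξ : ℕ → X := fun n => if n < T then z n else f^[n - T] q with hξdef
  have hξ_le : ∀ n, n ≤ T → ξ n = z n := by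
    intro n hn
    rcases lt_or_eq_of_le hn with h | h
    · simp [hξdef, h]
    · subst h; simp [hξdef, hTq]
  have hξ_tail : ∀ s, ξ (T + s) = f^[s] q := by
    intro s
    have : ¬ T + s < T := by omega
    simp only [hξdef, this, if_false]
    congr 1; omega
  have hξ_jump : ∀ n, dist (f (ξ n)) (ξ (n + 1)) ≤ δ := by
    intro n
    rcases lt_or_ge n T with h | h
    · rw [hξ_le n h.le, hξ_le (n+1) (by omega)]
      exact hjump n h
    · obtain ⟨s, rfl⟩ : ∃ s, n = T + s := ⟨n - T, by omega⟩
      rw [hξ_tail s, show T + s + 1 = T + (s + 1) by omega, hξ_tail (s+1)]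
      have heq : f (f^[s] q) = f^[s + 1] q := (Function.iterate_succ_apply' f s q).symm
      rw [heq, dist_self]
      exact le_of_lt (lt_min hδ0 hε)
  -- prepended pseudo-orbits
  set Ξ : ℕ → ℕ → X := fun M n => if n < M * k then f^[n + φ] p else ξ (n - M * k) with hΞdef
  have hΞ_head : ∀ M n, n ≤ M * k → Ξ M n = f^[n + φ] p := by
    intro M n hn
    rcases lt_or_eq_of_le hn with h | h
    · simp [hΞdef, h]
    · subst h
      simp only [hΞdef, lt_irrefl, if_false, Nat.sub_self]
      rw [show ξ 0 = f^[φ] p by rw [hξ_le 0 (by omega), h0]]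
      have hmq : M * k + φ ≡ φ [MOD k] := by rw [Nat.add_comm]; exact modeq_add_mul φ M k
      exact (iter_congr hk hmq).symm
  have hΞ_tail : ∀ M s, Ξ M (M * k + s) = ξ s := by
    intro M s
    have : ¬ M * k + s < M * k := by omega
    simp only [hΞdef, this, if_false]
    congr 1; omega
  have hΞ_jump : ∀ M n, dist (f (Ξ M n)) (Ξ M (n + 1)) ≤ δ := by
    intro M n
    rcases lt_or_ge n (M * k) with h | h
    · rw [hΞ_head M n h.le, hΞ_head M (n+1) (by omega)]
      have heq : f (f^[n + φ] p) = f^[n + 1 + φ] p := by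
        rw [← Function.iterate_succ_apply' f (n + φ) p]
        congr 1
        omega
      rw [heq, dist_self]
      exact le_of_lt (lt_min hδ0 hε)
    · obtain ⟨s, rfl⟩ : ∃ s, n = M * k + s := ⟨n - M * k, by omega⟩
      rw [hΞ_tail M s, show M * k + s + 1 = M * k + (s + 1) by omega, hΞ_tail M (s+1)]
      exact hξ_jump s
  -- shadowing points
  have hM : ∀ M : ℕ, ∃ u : X, ∀ n, dist (f^[n] u) (Ξ M n) ≤ ε := by
    intro M
    exact hshad (Ξ M) (fun n => (hΞ_jump M n).trans (min_le_left _ _))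
  choose u hu using hM
  -- backward partial orbits
  set V : ℕ → ℕ → X := fun M j => f^[M * k - j] (u M) with hVdef
  obtain ⟨v, -, σ, hσ, hconv⟩ := (isCompact_univ : IsCompact (Set.univ : Set (ℕ → X))).tendsto_subseq
    (x := fun M => V M) (fun M => Set.mem_univ _)
  have hptwise : ∀ j, Tendsto (fun l => V (σ l) j) atTop (𝓝 (v j)) := by
    intro j
    exact (tendsto_pi_nhds.1 hconv) j
  set w : X := v 0 with hwdef
  -- forward closeness of the limit
  have hVforward : ∀ M n, dist (f^[n] (V M 0)) (ξ n) ≤ ε := by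
    intro M n
    have h1 : f^[n] (V M 0) = f^[n + M * k] (u M) := by
      rw [hVdef]; simp only [Nat.sub_zero]
      exact (Function.iterate_add_apply f n (M*k) (u M)).symm
    rw [h1, ← hΞ_tail M n, show M * k + n = n + M * k by omega]
    exact hu M (n + M * k)
  have hforward : ∀ n, dist (f^[n] w) (ξ n) ≤ ε := by
    intro n
    have hcont : Tendsto (fun l => f^[n] (V (σ l) 0)) atTop (𝓝 (f^[n] w)) :=
      ((hf.iterate n).tendsto w).comp (hptwise 0)
    exact lim_dist_le hcont (fun l => hVforward (σ l) n)
  -- backward structure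
  set P : ℕ → X := fun j => f^[j * (k - 1) + φ] p with hPdef
  have hmod_back : ∀ {M j : ℕ}, j ≤ M * k → (M * k - j + φ) ≡ (j * (k-1) + φ) [MOD k] := by
    intro M j hj
    refine Nat.ModEq.add_right φ ?_
    have hjk : j * (k - 1) + j = j * k := by
      cases k with
      | zero => omega
      | succ k' => rw [Nat.succ_sub_one, Nat.mul_succ]
    apply Nat.ModEq.add_right_cancel' j
    rw [show M * k - j + j = M * k by omega, hjk]
    calc M * k ≡ 0 [MOD k] := by simpa using modeq_add_mul 0 M k
    _ ≡ j * k [MOD k] := by simpa using (modeq_add_mul 0 j k).symm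
  have hVback : ∀ M j, j ≤ M * k → dist (V M j) (P j) ≤ ε := by
    intro M j hj
    have h1 : Ξ M (M * k - j) = f^[M * k - j + φ] p := hΞ_head M _ (by omega)
    have h2 : f^[M * k - j + φ] p = P j := iter_congr hk (hmod_back hj)
    have := hu M (M * k - j)
    rw [h1, h2] at this
    exact this
  have hback : ∀ j, dist (v j) (P j) ≤ ε := by
    intro j
    have hev : ∀ l, j ≤ l → dist (V (σ l) j) (P j) ≤ ε := by
      intro l hl
      refine hVback (σ l) j ?_
      calc j ≤ l := hl
      _ ≤ σ l := hσ.le_apply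
      _ ≤ σ l * k := Nat.le_mul_of_pos_right _ hk0
    have hcont : Tendsto (fun l => V (σ (l + j)) j) atTop (𝓝 (v j)) :=
      (hptwise j).comp (tendsto_add_atTop_nat j)
    exact lim_dist_le hcont (fun l => hev (l + j) (by omega))
  -- v is a backward orbit
  have hfv : ∀ j, f (v (j + 1)) = v j := by
    intro j
    have hVstep : ∀ M, j + 1 ≤ M * k → f (V M (j+1)) = V M j := by
      intro M hj
      rw [hVdef]
      simp only
      rw [← Function.iterate_succ_apply' f (M * k - (j+1)) (u M)]
      congr 1; omega
    have h1 : Tendsto (fun l => f (V (σ (l + (j+1))) (j+1))) atTop (𝓝 (f (v (j+1)))) :=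
      (hf.tendsto _).comp ((hptwise (j+1)).comp (tendsto_add_atTop_nat (j+1)))
    have h2 : Tendsto (fun l => f (V (σ (l + (j+1))) (j+1))) atTop (𝓝 (v j)) := by
      have heq : ∀ l, f (V (σ (l + (j+1))) (j+1)) = V (σ (l + (j+1))) j := by
        intro l
        refine hVstep _ ?_
        calc j + 1 ≤ l + (j+1) := by omega
        _ ≤ σ (l + (j+1)) := hσ.le_apply
        _ ≤ σ (l + (j+1)) * k := Nat.le_mul_of_pos_right _ hk0
      exact (((hptwise j).comp (tendsto_add_atTop_nat (j+1))).congr (fun l => (heq l).symm))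
    exact tendsto_nhds_unique h1 h2
  -- full orbits
  set ω : ℤ → X := fun t => if 0 ≤ t then f^[t.toNat] w else v (-t).toNat with hωdef
  have hω : FullOrbit f ω := by
    intro t
    simp only [hωdef]
    rcases le_or_gt 0 t with ht | ht
    · rw [if_pos ht, if_pos (by omega)]
      rw [show (t+1).toNat = t.toNat + 1 by omega, Function.iterate_succ_apply']
    · rcases eq_or_lt_of_le (show t ≤ -1 by omega) with ht1 | ht1
      · rw [if_neg (by omega), if_pos (by omega)]
        rw [show t = -1 from ht1]
        simpa using hfv 0
      · rw [if_neg (by omega), if_neg (by omega)]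
        have h1 : (-t).toNat = (-(t+1)).toNat + 1 := by omega
        rw [h1]
        exact hfv _
  set πb : ℤ → X := fun t => if 0 ≤ t then f^[t.toNat + φ] p else P (-t).toNat with hπdef
  have hP_step : ∀ j, f (P (j + 1)) = P j := by
    intro j
    rw [hPdef]
    simp only
    rw [← Function.iterate_succ_apply' f ((j+1) * (k-1) + φ) p]
    refine iter_congr hk ?_
    show (j+1) * (k-1) + φ + 1 ≡ j * (k-1) + φ [MOD k]
    have : (j+1) * (k-1) + φ + 1 = (j * (k-1) + φ) + 1 * k := by
      cases k with
      | zero => omega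
      | succ k' =>
        rw [Nat.succ_sub_one, Nat.succ_mul, one_mul]
        omega
    rw [this]
    exact modeq_add_mul _ 1 k
  have hπ : FullOrbit f πb := by
    intro t
    simp only [hπdef]
    rcases le_or_gt 0 t with ht | ht
    · rw [if_pos ht, if_pos (by omega)]
      rw [show (t+1).toNat = t.toNat + 1 by omega, ← Function.iterate_succ_apply' f (t.toNat + φ) p]
      congr 1; omega
    · rcases eq_or_lt_of_le (show t ≤ -1 by omega) with ht1 | ht1
      · rw [if_neg (by omega), if_pos (by omega)]
        rw [show t = -1 from ht1]
        have := hP_step 0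
        simp only [hPdef] at this ⊢
        simpa using this
      · rw [if_neg (by omega), if_neg (by omega)]
        have h1 : (-t).toNat = (-(t+1)).toNat + 1 := by omega
        rw [h1]
        exact hP_step _
  -- backward convergence
  have hωv : ∀ n : ℕ, ω (-(n:ℤ)) = v n := by
    intro n
    simp only [hωdef]
    rcases Nat.eq_zero_or_pos n with h | h
    · subst h; simp [hwdef]
    · rw [if_neg (by omega)]
      congr 1; omega
  have hπP : ∀ n : ℕ, πb (-(n:ℤ)) = P n := by
    intro n
    simp only [hπdef]
    rcases Nat.eq_zero_or_pos n with h | h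
    · subst h
      simp only [Nat.cast_zero, neg_zero, le_refl, if_pos, Int.toNat_zero]
      simp [hPdef]
    · rw [if_neg (by omega)]
      congr 1; omega
  have hbacklim : Tendsto (fun n : ℕ => dist (v n) (P n)) atTop (𝓝 0) := by
    have := hexp.2 ω πb hω hπ (fun n => by rw [hωv n, hπP n]; exact (hback n).trans hεc)
    exact this.congr (fun n => by rw [hωv n, hπP n])
  -- stable-set conclusions
  have htail : ∀ s : ℕ, dist (f^[T + s] w) (f^[s] q) ≤ ε := by
    intro s
    have := hforward (T + s)
    rwa [hξ_tail s] at this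
  have hws : f^[T] w ∈ Ws f q := ws_of_tail hsurj hexp (fun s => (htail s).trans hεc)
  have htr : f^[T] w ∈ Ws f (f^[ψ] p) := ws_trans hqws hws
  -- membership in B
  have hwB : w ∈ B := by
    refine memB_of_chains hBeq hpB ?_ ?_
    · intro α hα
      obtain ⟨N1, hN1⟩ := (Metric.tendsto_atTop).1 hbacklim α hα
      set j := N1 + 1 with hjdef
      have hdj : dist (v j) (P j) ≤ α := by
        have := hN1 j (by omega)
        rw [Real.dist_eq, sub_zero] at this
        exact (le_abs_self _).trans this.le
      set e := j * (k - 1) + φ + k with hedef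
      have hPe : f^[e] p = P j := by
        rw [hPdef]
        exact iter_congr hk (by rw [hedef, show j * (k-1) + φ + k = (j * (k-1) + φ) + 1 * k by omega]; exact modeq_add_mul _ 1 k)
      have hchain1 : ChainRel f α p (v j) := by
        refine chain_orbit (le_of_lt hα) (by omega : 0 < e) ?_
        rw [hPe, dist_comm]
        exact hdj
      have hchain2 : ChainRel f α (v j) w := by
        refine chain_of_pj (L := j) (z := fun s => v (j - s)) (by omega) (by simp) (by simp [hwdef]) ?_
        intro i hi
        have h1 := hfv (j - i - 1)
        rw [show j - i - 1 + 1 = j - i by omega] at h1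
        show dist (f (v (j - i))) (v (j - (i + 1))) ≤ α
        rw [show j - (i+1) = j - i - 1 by omega, h1, dist_self]
        exact le_of_lt hα
      exact chain_concat hchain1 hchain2
    · intro α hα
      have hg : Tendsto (fun n : ℕ => dist (f^[n] (f^[ψ] p)) (f^[n] (f^[T] w))) atTop (𝓝 0) := htr
      obtain ⟨n, hnN, hn1, hmod, hgn⟩ := pick_aligned hk0 hg hα ψ 1
      have hiter : f^[n] (f^[ψ] p) = p := by
        rw [← Function.iterate_add_apply]
        exact iter_congr hk (by simpa using hmod)
      refine chain_orbit (le_of_lt hα) (by omega : 0 < T + n) ?_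
      have h1 : f^[T + n] w = f^[n] (f^[T] w) := by
        rw [← Function.iterate_add_apply]
        congr 1; omega
      rw [h1, dist_comm, ← hiter]
      exact hgn
  refine ⟨w, hwB, ?_, htail, hws, ?_⟩
  · intro n hn
    have := hforward n
    rwa [hξ_le n hn] at this
  · intro a ha
    refine ws_pull T htr ?_
    rw [← Function.iterate_add_apply]
    exact iter_congr hk (by rw [Nat.add_comm T a]; exact ha)
end Workhorse

section GSdef
variable [CompactSpace X] {f : X → X} {B : Set X} {c : ℝ} {x0 : X}

/-- residues mod `k` of lengths of arbitrarily fine loops at `p`. -/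
def GS (f : X → X) (p : X) (k : ℕ) : Set (ZMod k) :=
  {t | ∀ α > 0, ∃ L, ∃ z : ℕ → X, z 0 = p ∧ z L = p ∧ PJ f α L z ∧ (L : ZMod k) = t}

variable {p : X} {k : ℕ}

lemma cast_of_modeq {a b : ℕ} (h : a ≡ b [MOD k]) : (a : ZMod k) = b :=
  (ZMod.natCast_eq_natCast_iff a b k).2 h

lemma modeq_of_cast {a b : ℕ} (h : (a : ZMod k) = b) : a ≡ b [MOD k] :=
  (ZMod.natCast_eq_natCast_iff a b k).1 h

lemma kminus1_cast (hk0 : 0 < k) : ((k - 1 : ℕ) : ZMod k) = -1 := by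
  · have h2 : ((k - 1 : ℕ) : ZMod k) + 1 = 0 := by
      have h3 : ((k - 1) + 1 : ℕ) = k := by omega
      calc ((k-1:ℕ) : ZMod k) + 1 = (((k-1) + 1 : ℕ) : ZMod k) := by push_cast; ring
      _ = ((k : ℕ) : ZMod k) := by rw [h3]
      _ = 0 := ZMod.natCast_self k
    exact eq_neg_of_add_eq_zero_left h2

lemma Tk_modeq (hk0 : 0 < k) (T : ℕ) : (T * (k - 1) + T) ≡ 0 [MOD k] := by
  · have h2 : T * (k-1) + T = T * k := by
      cases k with
      | zero => omega
      | succ k' => rw [Nat.succ_sub_one, Nat.mul_succ]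
    rw [h2]
    simpa using modeq_add_mul 0 T k

lemma GS_zero : (0 : ZMod k) ∈ GS f p k := by
  intro α hα
  exact ⟨0, fun _ => p, rfl, rfl, fun i hi => by omega, by simp⟩

lemma GS_k (hk : f^[k] p = p) : ((k : ℕ) : ZMod k) ∈ GS f p k := by
  intro α hα
  refine ⟨k, fun n => f^[n] p, by simp, hk, fun i hi => ?_, rfl⟩
  rw [← Function.iterate_succ_apply' f i p, dist_self]
  exact le_of_lt hα

lemma GS_add {s t : ZMod k} (hs : s ∈ GS f p k) (ht : t ∈ GS f p k) : s + t ∈ GS f p k := by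
  intro α hα
  obtain ⟨L1, z1, h01, he1, hj1, hc1⟩ := hs α hα
  obtain ⟨L2, z2, h02, he2, hj2, hc2⟩ := ht α hα
  refine ⟨L1 + L2, app z1 L1 z2, ?_, ?_, PJ.app hj1 (by rw [he1, h02]) hj2, ?_⟩
  · rcases Nat.eq_zero_or_pos L1 with h | h
    · subst h; rw [app_ge le_rfl]; simpa using h02
    · rw [app_lt h]; exact h01
  · rw [app_add, he2]
  · push_cast; rw [hc1, hc2]

lemma GS_nsmul {t : ZMod k} (ht : t ∈ GS f p k) : ∀ j : ℕ, ((j : ZMod k) * t) ∈ GS f p k := by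
  intro j
  induction j with
  | zero => simpa using GS_zero
  | succ j ih =>
    have := GS_add ih ht
    have he : ((j+1 : ℕ) : ZMod k) * t = (j : ZMod k) * t + t := by push_cast; ring
    rwa [he]

lemma GS_neg (hk0 : 0 < k) {t : ZMod k} (ht : t ∈ GS f p k) : -t ∈ GS f p k := by
  have := GS_nsmul ht (k - 1)
  rwa [kminus1_cast hk0, neg_one_mul] at this

lemma GS_natmul {t : ZMod k} (ht : t ∈ GS f p k) (j : ℕ) (n : ℕ) (h : (n : ZMod k) = (j : ZMod k) * t) :
    (n : ZMod k) ∈ GS f p k := by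
  rw [h]; exact GS_nsmul ht j

end GSdef

section Apps
variable [CompactSpace X] {f : X → X} {B : Set X} {c : ℝ} {p : X} {k : ℕ} {x0 : X}
variable (hf : Continuous f) (hsurj : Function.Surjective f) (hc : 0 < c)
  (hexp : BiAsympCExpWith f c) (hsh : Shadowing f) (hx0 : ChainRecurrent f x0)
  (hBeq : B = {y | ChainRecurrent f y ∧ ChainEquiv f x0 y})
  (hpB : p ∈ B) (hk0 : 0 < k) (hk : f^[k] p = p)

lemma loop_pow {α : ℝ} {L : ℕ} {z : ℕ → X} (h0 : z 0 = p) (hL : z L = p) (hpj : PJ f α L z) :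
    ∀ j : ℕ, ∃ Z : ℕ → X, Z 0 = p ∧ Z (j * L) = p ∧ PJ f α (j * L) Z := by
  intro j
  induction j with
  | zero => exact ⟨fun _ => p, rfl, rfl, fun i hi => by omega⟩
  | succ j ih =>
    obtain ⟨Z, hZ0, hZE, hZJ⟩ := ih
    refine ⟨app Z (j*L) z, ?_, ?_, ?_⟩
    · rcases Nat.eq_zero_or_pos (j*L) with h | h
      · rw [h, app_ge le_rfl]; simpa using h0
      · rw [app_lt h]; exact hZ0
    · rw [show (j+1)*L = j*L + L by ring, app_add, hL]
    · have := PJ.app hZJ (by rw [hZE, h0]) hpj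
      rw [show (j+1)*L = j*L + L by ring]
      exact this

include hk0 hk in
lemma ws_pick {x : X} {b : ℕ} (hx : x ∈ Ws f (f^[b] p))
    {α : ℝ} (hα : 0 < α) (N : ℕ) :
    ∃ n, N ≤ n ∧ 1 ≤ n ∧ (n + b) ≡ 0 [MOD k] ∧ dist (f^[n] x) p ≤ α := by
  obtain ⟨n, h1, h2, h3, h4⟩ := pick_aligned hk0 (ws_mem_iff.1 hx) hα b N
  refine ⟨n, h1, h2, h3, ?_⟩
  have hpe : f^[n] (f^[b] p) = p := by
    rw [← Function.iterate_add_apply]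
    exact iter_congr hk (by simpa using h3)
  rw [← hpe, dist_comm]
  exact h4

include hf hx0 hBeq hpB hk0 hk in
lemma inter_phase {a b : ℕ} {q : X}
    (hqa : q ∈ closure (Ws f (f^[a] p) ∩ B)) (hqb : q ∈ closure (Ws f (f^[b] p) ∩ B)) :
    ((b : ZMod k) - (a : ZMod k)) ∈ GS f p k := by
  haveI : NeZero k := ⟨hk0.ne'⟩
  intro α hα
  set β := α / 4 with hβdef
  have hβ : 0 < β := by positivity
  obtain ⟨x, ⟨hxW, hxB⟩, hqx⟩ := Metric.mem_closure_iff.1 hqa β hβ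
  obtain ⟨y, ⟨hyW, hyB⟩, hqy⟩ := Metric.mem_closure_iff.1 hqb β hβ
  obtain ⟨L1, z1, hL1, h01, he1, hj1⟩ := chainB hBeq hpB hyB β hβ
  set z1x : ℕ → X := fun n => if n = L1 then x else z1 n with hz1x
  have h01x : z1x 0 = p := by
    rw [hz1x]; simp only; rw [if_neg (by omega : ¬ (0:ℕ) = L1)]; exact h01
  have he1x : z1x L1 = x := by rw [hz1x]; simp
  have hyx : dist y x ≤ 2 * β := by
    have h3 := dist_triangle y q x
    rw [dist_comm y q] at h3
    linarith [le_of_lt hqx, le_of_lt hqy]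
  have hj1x : PJ f (3 * β) L1 z1x := by
    intro i hi
    rw [hz1x]
    simp only
    rw [if_neg (by omega : ¬ i = L1)]
    by_cases h2 : i + 1 = L1
    · rw [if_pos h2]
      calc dist (f (z1 i)) x ≤ dist (f (z1 i)) (z1 (i+1)) + dist (z1 (i+1)) x := dist_triangle _ _ _
      _ ≤ β + 2*β := add_le_add (hj1 i hi) (by rw [h2, he1]; exact hyx)
      _ = 3*β := by ring
    · rw [if_neg h2]
      exact (hj1 i hi).trans (by linarith)
  obtain ⟨na, -, hna1, hnaMod, hnad⟩ := ws_pick hk0 hk hxW hβ 0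
  obtain ⟨nb, -, hnb1, hnbMod, hnbd⟩ := ws_pick hk0 hk hyW hβ 0
  set loopx := app z1x L1 (orbTo f x p na) with hloopx
  have hgluex : z1x L1 = orbTo f x p na 0 := by rw [he1x, orbTo_zero hna1]
  have hloopx0 : loopx 0 = p := by
    rw [hloopx, app_left_of_glue hgluex (by omega)]; exact h01x
  have hloopxE : loopx (L1 + na) = p := by rw [hloopx, app_add, orbTo_last]
  have hloopxJ : PJ f (3*β) (L1 + na) loopx :=
    PJ.app hj1x hgluex ((pj_orbTo (le_of_lt hβ) hnad).mono (by linarith))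
  set loopy := app z1 L1 (orbTo f y p nb) with hloopy
  have hgluey : z1 L1 = orbTo f y p nb 0 := by rw [he1, orbTo_zero hnb1]
  have hloopy0 : loopy 0 = p := by
    rw [hloopy, app_left_of_glue hgluey (by omega)]; exact h01
  have hloopyE : loopy (L1 + nb) = p := by rw [hloopy, app_add, orbTo_last]
  have hloopyJ : PJ f (3*β) (L1 + nb) loopy :=
    PJ.app (PJ.mono hj1 (by linarith)) hgluey ((pj_orbTo (le_of_lt hβ) hnbd).mono (by linarith))
  obtain ⟨Z, hZ0, hZE, hZJ⟩ := loop_pow hloopy0 hloopyE hloopyJ (k - 1)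
  refine ⟨(L1 + na) + (k-1) * (L1 + nb), app loopx (L1+na) Z, ?_, ?_, ?_, ?_⟩
  · rw [app_left_of_glue (by rw [hloopxE, hZ0]) (by omega)]; exact hloopx0
  · rw [app_add, hZE]
  · exact (PJ.app hloopxJ (by rw [hloopxE, hZ0]) hZJ).mono (by linarith)
  · have hca : ((na + a : ℕ) : ZMod k) = ((0:ℕ) : ZMod k) := cast_of_modeq hnaMod
    have hcb : ((nb + b : ℕ) : ZMod k) = ((0:ℕ) : ZMod k) := cast_of_modeq hnbMod
    push_cast at hca hcb ⊢
    rw [kminus1_cast hk0]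
    have h1 : (na : ZMod k) = -(a : ZMod k) := by linear_combination hca
    have h2 : (nb : ZMod k) = -(b : ZMod k) := by linear_combination hcb
    rw [h1, h2]
    ring

include hf hsurj hc hexp hsh hx0 hBeq hpB hk0 hk in
lemma C_subset {ρ : ZMod k} (hρ : ρ ∈ GS f p k) {b b' : ℕ}
    (hbb : (b : ZMod k) = (b' : ZMod k) + ρ) :
    closure (Ws f (f^[b] p) ∩ B) ⊆ closure (Ws f (f^[b'] p) ∩ B) := by
  haveI : NeZero k := ⟨hk0.ne'⟩
  refine closure_minimal ?_ isClosed_closure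
  rintro x ⟨hxW, hxB⟩
  rw [Metric.mem_closure_iff]
  intro r hr
  set ε := min (r/2) c with hεdef
  have hε : 0 < ε := lt_min (by positivity) hc
  have hεc : ε ≤ c := min_le_right _ _
  obtain ⟨δ, hδ, hδε, H⟩ := workhorse hf hsurj hexp hsh hx0 hBeq hpB hk0 hk hε hεc
  obtain ⟨L0, z0, hL0, h00, he0, hj0⟩ := chainB hBeq hpB hxB δ hδ
  obtain ⟨n1, -, hn11, hn1Mod, hn1d⟩ := ws_pick hk0 hk hxW hδ 0
  obtain ⟨ℓ, zρ, hρ0, hρE, hρJ, hρc⟩ := hρ δ hδ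
  have hglue1 : z0 L0 = orbTo f x p n1 0 := by rw [he0, orbTo_zero hn11]
  have hmid : app z0 L0 (orbTo f x p n1) (L0 + n1) = p := by rw [app_add, orbTo_last]
  set zc : ℕ → X := app (app z0 L0 (orbTo f x p n1)) (L0 + n1) zρ with hzc
  set T := L0 + n1 + ℓ with hT
  have hzc0 : zc 0 = f^[0] p := by
    rw [hzc, app_left_of_glue (by rw [hmid, hρ0]) (by omega),
      app_left_of_glue hglue1 (by omega), h00]
    simp
  have hzcT : zc T = p := by
    rw [hzc, hT, show L0 + n1 + ℓ = (L0 + n1) + ℓ by ring, app_add, hρE]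
  have hzcJ : PJ f δ T zc := by
    rw [hzc, hT]
    exact PJ.app (PJ.app hj0 hglue1 (pj_orbTo (le_of_lt hδ) hn1d)) (by rw [hmid, hρ0]) hρJ
  have hq : p ∈ Ws f (f^[0] p) := by simpa using ws_refl p
  obtain ⟨w, hwB, hfront, -, -, hphase⟩ := H 0 0 T p zc (by omega) hzc0 hzcT hzcJ hq
  set a := T * (k - 1) with ha
  have haT : (a + T) ≡ 0 [MOD k] := by rw [ha]; exact Tk_modeq hk0 T
  have hwWs := hphase a haT
  set v := f^[L0] w with hv
  have hvW0 : v ∈ Ws f (f^[L0 + a] p) := by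
    have := ws_iterate L0 hwWs
    rwa [← Function.iterate_add_apply] at this
  have hcast : ((L0 + a : ℕ) : ZMod k) = (b' : ZMod k) := by
    have h1 : ((a + T : ℕ) : ZMod k) = ((0:ℕ) : ZMod k) := cast_of_modeq haT
    have h2 : ((n1 + b : ℕ) : ZMod k) = ((0:ℕ) : ZMod k) := cast_of_modeq hn1Mod
    have hTc : (T : ZMod k) = (L0 : ZMod k) + n1 + ℓ := by rw [hT]; push_cast; ring
    push_cast at h1 h2 ⊢
    calc (L0 : ZMod k) + a = (L0 : ZMod k) + -(T : ZMod k) := by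
          rw [show (a : ZMod k) = -(T : ZMod k) from by linear_combination h1]
    _ = -(n1 : ZMod k) - ℓ := by rw [hTc]; ring
    _ = (b : ZMod k) - ρ := by
          rw [show -(n1 : ZMod k) = (b : ZMod k) from by linear_combination -h2, hρc]
    _ = (b' : ZMod k) := by rw [hbb]; ring
  have hvB : v ∈ B := by rw [hv]; exact iterB_mem hx0 hBeq hf hwB L0
  have hvW : v ∈ Ws f (f^[b'] p) := by
    rwa [iter_congr hk (modeq_of_cast hcast)] at hvW0
  refine ⟨v, ⟨hvW, hvB⟩, ?_⟩
  have hzcL0 : zc L0 = x := by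
    rw [hzc, app_lt (by omega : L0 < L0 + n1), app_ge le_rfl, Nat.sub_self, orbTo_zero hn11]
  have hxv : dist (f^[L0] w) (zc L0) ≤ ε := hfront L0 (by omega)
  rw [hzcL0] at hxv
  rw [dist_comm]
  calc dist (f^[L0] w) x ≤ ε := hxv
  _ ≤ r/2 := min_le_left _ _
  _ < r := by linarith

include hf hsurj hc hexp hsh hx0 hBeq hpB hk0 hk in
lemma coverA {q : X} (hq : q ∈ B) {r : ℝ} (hr : 0 < r) :
    ∃ i, i < k ∧ ∃ v, v ∈ Ws f (f^[i] p) ∩ B ∧ dist q v < r := by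
  set ε := min (r/2) c with hεdef
  have hε : 0 < ε := lt_min (by positivity) hc
  have hεc : ε ≤ c := min_le_right _ _
  obtain ⟨δ, hδ, hδε, H⟩ := workhorse hf hsurj hexp hsh hx0 hBeq hpB hk0 hk hε hεc
  obtain ⟨L1, z1, hL1, h01, he1, hj1⟩ := chainB hBeq hpB hq δ hδ
  obtain ⟨L2, z2, hL2, h02, he2, hj2⟩ := chainB hBeq hq hpB δ hδ
  have hglue : z1 L1 = z2 0 := by rw [he1, h02]
  set zc := app z1 L1 z2 with hzc
  set T := L1 + L2 with hT
  have hzc0 : zc 0 = f^[0] p := by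
    rw [hzc, app_left_of_glue hglue (by omega), h01]; simp
  have hzcT : zc T = p := by rw [hzc, hT, app_add, he2]
  have hzcJ : PJ f δ T zc := PJ.app hj1 hglue hj2
  have hqws : p ∈ Ws f (f^[0] p) := by simpa using ws_refl p
  obtain ⟨w, hwB, hfront, -, -, hphase⟩ := H 0 0 T p zc (by omega) hzc0 hzcT hzcJ hqws
  set a := T * (k - 1) with ha
  have hwWs := hphase a (by rw [ha]; exact Tk_modeq hk0 T)
  set v := f^[L1] w with hv
  have hvW0 : v ∈ Ws f (f^[L1 + a] p) := by
    have := ws_iterate L1 hwWs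
    rwa [← Function.iterate_add_apply] at this
  refine ⟨(L1 + a) % k, Nat.mod_lt _ hk0, v, ⟨?_, ?_⟩, ?_⟩
  · rwa [iter_congr hk (Nat.mod_modEq (L1 + a) k)]
  · rw [hv]; exact iterB_mem hx0 hBeq hf hwB L1
  · have hzcL1 : zc L1 = q := by rw [hzc, app_ge le_rfl, Nat.sub_self, h02]
    have := hfront L1 (by omega)
    rw [hzcL1] at this
    rw [dist_comm]
    calc dist (f^[L1] w) q ≤ ε := this
    _ ≤ r/2 := min_le_left _ _
    _ < r := by linarith

lemma image_closure_compact (hf : Continuous f) (S : Set X) :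
    f '' closure S = closure (f '' S) := by
  apply subset_antisymm (image_closure_subset_closure_image hf)
  apply closure_minimal (Set.image_mono (f := f) subset_closure)
  exact (isClosed_closure.isCompact.image hf).isClosed

include hf hsurj hc hexp hsh hx0 hBeq hpB hk0 hk in
lemma image_C (i : ℕ) :
    f '' closure (Ws f (f^[i] p) ∩ B) = closure (Ws f (f^[i+1] p) ∩ B) := by
  haveI : NeZero k := ⟨hk0.ne'⟩
  rw [image_closure_compact hf]
  apply subset_antisymm
  · apply closure_mono
    rintro - ⟨y, ⟨hyW, hyB⟩, rfl⟩
    refine ⟨?_, fB_mem hx0 hBeq hf hyB⟩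
    have h1 := ws_iterate 1 hyW
    have he : f^[1] (f^[i] p) = f^[i+1] p := by
      rw [← Function.iterate_add_apply]; congr 1; omega
    rw [he] at h1
    simpa using h1
  · have key : Ws f (f^[i+1] p) ∩ B ⊆ closure (f '' (Ws f (f^[i] p) ∩ B)) := by
      rintro zz ⟨hzW, hzB⟩
      rw [Metric.mem_closure_iff]
      intro r hr
      set ε := min (r/2) c with hεdef
      have hε : 0 < ε := lt_min (by positivity) hc
      have hεc : ε ≤ c := min_le_right _ _
      obtain ⟨δ, hδ, hδε, H⟩ := workhorse hf hsurj hexp hsh hx0 hBeq hpB hk0 hk hε hεc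
      obtain ⟨L0, z0, hL0, h00, he0, hj0⟩ := chainB hBeq hpB hzB δ hδ
      obtain ⟨n1, -, hn11, hn1Mod, hn1d⟩ := ws_pick hk0 hk hzW hδ 0
      obtain ⟨L, rfl⟩ : ∃ L, L0 = L + 1 := ⟨L0 - 1, by omega⟩
      have hglue1 : z0 (L+1) = orbTo f zz p n1 0 := by rw [he0, orbTo_zero hn11]
      set zc := app z0 (L+1) (orbTo f zz p n1) with hzc
      set T := (L+1) + n1 with hT
      have hzc0 : zc 0 = f^[0] p := by
        rw [hzc, app_left_of_glue hglue1 (by omega), h00]; simp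
      have hzcT : zc T = p := by rw [hzc, hT, app_add, orbTo_last]
      have hzcJ : PJ f δ T zc := by
        rw [hzc, hT]
        exact PJ.app hj0 hglue1 (pj_orbTo (le_of_lt hδ) hn1d)
      have hqws : p ∈ Ws f (f^[0] p) := by simpa using ws_refl p
      obtain ⟨w, hwB, hfront, -, -, hphase⟩ := H 0 0 T p zc (by omega) hzc0 hzcT hzcJ hqws
      set a := T * (k - 1) with ha
      have haT : (a + T) ≡ 0 [MOD k] := by rw [ha]; exact Tk_modeq hk0 T
      have hwWs := hphase a haT
      set w' := f^[L] w with hw'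
      have hvW0 : w' ∈ Ws f (f^[L + a] p) := by
        have := ws_iterate L hwWs
        rwa [← Function.iterate_add_apply] at this
      have hcast : ((L + a : ℕ) : ZMod k) = (i : ZMod k) := by
        have h1 : ((a + T : ℕ) : ZMod k) = ((0:ℕ) : ZMod k) := cast_of_modeq haT
        have h2 : ((n1 + (i+1) : ℕ) : ZMod k) = ((0:ℕ) : ZMod k) := cast_of_modeq hn1Mod
        have hTc : (T : ZMod k) = (L : ZMod k) + 1 + n1 := by rw [hT]; push_cast; ring
        push_cast at h1 h2 ⊢
        calc (L : ZMod k) + a = (L : ZMod k) + -(T : ZMod k) := by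
              rw [show (a : ZMod k) = -(T : ZMod k) from by linear_combination h1]
        _ = -1 - (n1 : ZMod k) := by rw [hTc]; ring
        _ = (i : ZMod k) := by linear_combination -h2
      have hvW : w' ∈ Ws f (f^[i] p) := by
        rwa [iter_congr hk (modeq_of_cast hcast)] at hvW0
      have hvB : w' ∈ B := by rw [hw']; exact iterB_mem hx0 hBeq hf hwB L
      refine ⟨f w', ⟨w', ⟨hvW, hvB⟩, rfl⟩, ?_⟩
      have hfw : f w' = f^[L+1] w := by
        rw [hw', ← Function.iterate_succ_apply' f L w]
      have hzcL : zc (L+1) = zz := by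
        rw [hzc, app_ge le_rfl, Nat.sub_self, orbTo_zero hn11]
      have hd := hfront (L+1) (by omega)
      rw [hzcL] at hd
      rw [dist_comm, ← hfw] at hd
      calc dist zz (f w') ≤ ε := by rw [dist_comm]; rwa [dist_comm] at hd
      _ ≤ r/2 := min_le_left _ _
      _ < r := by linarith
    calc closure (Ws f (f^[i+1] p) ∩ B) ⊆ closure (closure (f '' (Ws f (f^[i] p) ∩ B))) :=
          closure_mono key
    _ = closure (f '' (Ws f (f^[i] p) ∩ B)) := closure_closure

end Apps

section Mixing
variable [CompactSpace X] {f : X → X} {B : Set X} {c : ℝ} {p : X} {k : ℕ} {x0 : X}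
variable (hf : Continuous f) (hsurj : Function.Surjective f) (hc : 0 < c)
  (hexp : BiAsympCExpWith f c) (hsh : Shadowing f) (hx0 : ChainRecurrent f x0)
  (hBeq : B = {y | ChainRecurrent f y ∧ ChainEquiv f x0 y})
  (hpB : p ∈ B) (hk0 : 0 < k) (hk : f^[k] p = p)

include hf hsurj hc hexp hsh hx0 hBeq hpB hk0 hk in
lemma mixing (m : ℕ) (hm0 : 0 < m) (hmGS : ((m : ℕ) : ZMod k) ∈ GS f p k) (i : ℕ) :
    TopMixingOn f^[m] (closure (Ws f (f^[i] p) ∩ B)) := by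
  haveI : NeZero k := ⟨hk0.ne'⟩
  intro U V hU hV hUC hVC
  set C := closure (Ws f (f^[i] p) ∩ B) with hC
  obtain ⟨u, huU, huC⟩ := hUC
  obtain ⟨v, hvV, hvC⟩ := hVC
  obtain ⟨ru, hru, hballu⟩ := Metric.isOpen_iff.1 hU u huU
  obtain ⟨rv, hrv, hballv⟩ := Metric.isOpen_iff.1 hV v hvV
  obtain ⟨x, ⟨hxW, hxB⟩, hux⟩ := Metric.mem_closure_iff.1 huC (ru/2) (by positivity)
  obtain ⟨y, ⟨hyW, hyB⟩, hvy⟩ := Metric.mem_closure_iff.1 hvC (rv/2) (by positivity)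
  set ε := min (min (ru/2) (rv/2)) c with hεdef
  have hε : 0 < ε := lt_min (lt_min (by positivity) (by positivity)) hc
  have hεc : ε ≤ c := min_le_right _ _
  obtain ⟨δ, hδ, hδε, H⟩ := workhorse hf hsurj hexp hsh hx0 hBeq hpB hk0 hk hε hεc
  -- chain p → x
  obtain ⟨L0, z0, hL0, h00, he0, hj0⟩ := chainB hBeq hpB hxB δ hδ
  obtain ⟨n1, -, hn11, hn1Mod, hn1d⟩ := ws_pick hk0 hk hxW hδ 0
  -- the y-loop
  obtain ⟨Ly, zy, hLy, h0y, hey, hjy⟩ := chainB hBeq hpB hyB δ hδ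
  obtain ⟨ny, -, hny1, hnyMod, hnyd⟩ := ws_pick hk0 hk hyW hδ 0
  set loopy := app zy Ly (orbTo f y p ny) with hloopy
  have hgluey : zy Ly = orbTo f y p ny 0 := by rw [hey, orbTo_zero hny1]
  have hloopy0 : loopy 0 = p := by
    rw [hloopy, app_left_of_glue hgluey (by omega)]; exact h0y
  have hloopyE : loopy (Ly + ny) = p := by rw [hloopy, app_add, orbTo_last]
  have hloopyJ : PJ f δ (Ly + ny) loopy :=
    PJ.app hjy hgluey (pj_orbTo (le_of_lt hδ) hnyd)
  obtain ⟨Z, hZ0, hZE, hZJ⟩ := loop_pow hloopy0 hloopyE hloopyJ (k - 1)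
  set LZ := (k-1) * (Ly + ny) with hLZ
  -- uniform selection of loops for each residue
  have hsel : ∀ t : ZMod k, ∃ Lt, t ∈ GS f p k →
      ∃ zt : ℕ → X, zt 0 = p ∧ zt Lt = p ∧ PJ f δ Lt zt ∧ ((Lt : ZMod k) = t) := by
    intro t
    by_cases ht : t ∈ GS f p k
    · obtain ⟨Lt, zt, h1, h2, h3, h4⟩ := ht δ hδ
      exact ⟨Lt, fun _ => ⟨zt, h1, h2, h3, h4⟩⟩
    · exact ⟨0, fun h => absurd h ht⟩
  choose Lsel hLsel using hsel
  set Λ := Finset.sup Finset.univ Lsel with hΛ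
  have hΛle : ∀ t, Lsel t ≤ Λ := fun t => Finset.le_sup (Finset.mem_univ t)
  refine ⟨n1 + Λ + LZ + Ly + 1, ?_⟩
  intro n hn
  have hmn : n1 + Λ + LZ + Ly + 1 ≤ m * n := le_trans hn (Nat.le_mul_of_pos_left n hm0)
  set t : ZMod k := ((m * n : ℕ) : ZMod k) with ht
  have htGS : t ∈ GS f p k := by
    have h1 : ((m*n : ℕ) : ZMod k) = ((n:ℕ) : ZMod k) * ((m:ℕ) : ZMod k) := by push_cast; ring
    rw [ht, h1]
    exact GS_nsmul hmGS n
  obtain ⟨zt, hzt0, hztE, hztJ, hztc⟩ := hLsel t htGS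
  -- the chain p → y of controlled length
  set ch2 := app zt (Lsel t) (app Z LZ zy) with hch2
  set L2 := Lsel t + (LZ + Ly) with hL2
  have hinner0 : app Z LZ zy 0 = p := by
    rw [app_left_of_glue (by rw [hZE, h0y]) (Nat.zero_le _)]; exact hZ0
  have hch20 : ch2 0 = p := by
    rw [hch2, app_left_of_glue (by rw [hztE, hinner0]) (Nat.zero_le _)]; exact hzt0
  have hch2E : ch2 L2 = y := by
    rw [hch2, hL2, app_add, app_add, hey]
  have hch2J : PJ f δ L2 ch2 := by
    rw [hch2, hL2]
    exact PJ.app hztJ (by rw [hztE, hinner0]) (PJ.app hZJ (by rw [hZE, h0y]) hjy)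
  -- cast facts
  have hkm1 : ((k-1 : ℕ) : ZMod k) = -1 := kminus1_cast hk0
  have hnyc : ((ny : ℕ) : ZMod k) = -((i : ℕ) : ZMod k) := by
    have := cast_of_modeq (k := k) hnyMod
    push_cast at this
    linear_combination this
  have hn1c : ((n1 : ℕ) : ZMod k) = -((i : ℕ) : ZMod k) := by
    have := cast_of_modeq (k := k) hn1Mod
    push_cast at this
    linear_combination this
  have hL2c : ((L2 : ℕ) : ZMod k) = t + (i : ZMod k) := by
    rw [hL2, hLZ]
    push_cast
    rw [hkm1, hztc, hnyc]
    ring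
  -- the waiting time s2
  set s2 := m * n - (n1 + L2) with hs2
  have hL2le : L2 ≤ Λ + LZ + Ly := by rw [hL2]; have := hΛle t; omega
  have hs2sum : n1 + L2 + s2 = m * n := by rw [hs2]; omega
  have hs2c : ((s2 : ℕ) : ZMod k) = ((0:ℕ) : ZMod k) := by
    have h1 : ((n1 + L2 + s2 : ℕ) : ZMod k) = ((m*n : ℕ) : ZMod k) := by rw [hs2sum]
    have htc : t = ((m : ℕ) : ZMod k) * ((n : ℕ) : ZMod k) := by rw [ht]; push_cast; ring
    push_cast at h1 ⊢
    rw [hn1c, hL2c] at h1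
    linear_combination h1 - htc
  have hs2mod : s2 ≡ 0 [MOD k] := modeq_of_cast hs2c
  have hs2p : f^[s2] p = p := by
    have h5 := iter_congr hk hs2mod
    rwa [Function.iterate_zero_apply] at h5
  -- assemble the full pseudo-orbit
  set orbp : ℕ → X := fun s => f^[s] p with horbp
  have horbpJ : PJ f δ s2 orbp := by
    intro j hj
    rw [horbp]
    simp only
    rw [← Function.iterate_succ_apply' f j p, dist_self]
    exact le_of_lt hδ
  set rest2 := app orbp s2 ch2 with hrest2
  set rest1 := app (orbTo f x p n1) n1 rest2 with hrest1
  set zc := app z0 L0 rest1 with hzc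
  set T := L0 + (n1 + (s2 + L2)) with hT
  have hglue3 : orbp s2 = ch2 0 := by
    show f^[s2] p = ch2 0
    rw [hs2p, hch20]
  have hrest20 : rest2 0 = p := by
    rw [hrest2, app_left_of_glue hglue3 (Nat.zero_le _)]
    show f^[0] p = p
    simp
  have hrest10 : rest1 0 = x := by
    rw [hrest1, app_left_of_glue (by rw [orbTo_last, hrest20]) (Nat.zero_le _), orbTo_zero hn11]
  have hzc0 : zc 0 = f^[0] p := by
    rw [hzc, app_lt hL0, h00]; simp
  have hzcT : zc T = y := by
    rw [hzc, hT, app_add, hrest1, app_add, hrest2, app_add, hch2E]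
  have hzcJ : PJ f δ T zc := by
    rw [hzc, hT]
    refine PJ.app hj0 (by rw [he0, hrest10]) ?_
    rw [hrest1]
    refine PJ.app (pj_orbTo (le_of_lt hδ) hn1d) (by rw [orbTo_last, hrest20]) ?_
    rw [hrest2]
    exact PJ.app horbpJ hglue3 hch2J
  obtain ⟨wb, hwbB, hfront, htail, hws, hphase⟩ :=
    H 0 i T y zc (by omega) hzc0 hzcT hzcJ hyW
  set a := i + T * (k - 1) with ha
  have haT : (a + T) ≡ i [MOD k] := by
    rw [ha, show i + T * (k-1) + T = i + (T * (k-1) + T) by omega]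
    have h1 := Nat.ModEq.add_left i (Tk_modeq hk0 T)
    simpa using h1
  have hwWs := hphase a haT
  -- the source point w
  set w := f^[L0] wb with hw
  have hwW0 : w ∈ Ws f (f^[L0 + a] p) := by
    rw [hw]
    have := ws_iterate L0 hwWs
    rwa [← Function.iterate_add_apply] at this
  have hwB : w ∈ B := by rw [hw]; exact iterB_mem hx0 hBeq hf hwbB L0
  have hcast : ((L0 + a : ℕ) : ZMod k) = (i : ZMod k) + (-t) := by
    have h1 : ((a + T : ℕ) : ZMod k) = ((i : ℕ) : ZMod k) := cast_of_modeq haT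
    have hTc : ((T : ℕ) : ZMod k) = (L0 : ZMod k) + (n1 + (s2 + L2)) := by rw [hT]; push_cast; ring
    push_cast at h1 ⊢
    have h2 : ((n1 : ZMod k) + (s2 + L2)) = t := by
      rw [hn1c, hL2c]
      have h3 : (s2 : ZMod k) = 0 := by rw [hs2c]; simp
      rw [h3]
      ring
    calc (L0 : ZMod k) + a = (L0 : ZMod k) + ((i : ZMod k) - (T : ZMod k)) := by
          rw [show (a : ZMod k) = (i : ZMod k) - (T : ZMod k) from by linear_combination h1]
    _ = (i : ZMod k) - ((n1 : ZMod k) + (s2 + L2)) := by rw [hTc]; ring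
    _ = (i : ZMod k) + (-t) := by rw [h2]; ring
  have hwC : w ∈ C := by
    rw [hC]
    have hsub := C_subset hf hsurj hc hexp hsh hx0 hBeq hpB hk0 hk
      (GS_neg hk0 htGS) (b := L0 + a) (b' := i) hcast
    exact hsub (subset_closure ⟨hwW0, hwB⟩)
  have hwU : w ∈ U := by
    apply hballu
    have hzcL0 : zc L0 = x := by
      rw [hzc, app_ge le_rfl, Nat.sub_self, hrest10]
    have hd := hfront L0 (by omega)
    rw [hzcL0] at hd
    rw [Metric.mem_ball]
    calc dist w u ≤ dist w x + dist x u := dist_triangle _ _ _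
    _ ≤ ε + dist x u := by rw [hw]; exact add_le_add_left hd _
    _ < ε + ru/2 := by
        have : dist x u < ru/2 := by rw [dist_comm]; exact hux
        linarith
    _ ≤ ru/2 + ru/2 := by
        have : ε ≤ ru/2 := le_trans (min_le_left _ _) (min_le_left _ _)
        linarith
    _ = ru := by ring
  -- the target point
  set w2 := f^[m * n] w with hw2
  have hw2T : w2 = f^[T] wb := by
    rw [hw2, hw, ← Function.iterate_add_apply]
    congr 1
    rw [hT]
    omega
  have hw2y : dist w2 y ≤ ε := by
    have := htail 0
    rw [Nat.add_zero] at this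
    rw [hw2T]
    simpa using this
  have hw2V : w2 ∈ V := by
    apply hballv
    rw [Metric.mem_ball]
    calc dist w2 v ≤ dist w2 y + dist y v := dist_triangle _ _ _
    _ < ε + rv/2 := by
        have : dist y v < rv/2 := by rw [dist_comm]; exact hvy
        linarith [hw2y]
    _ ≤ rv/2 + rv/2 := by
        have : ε ≤ rv/2 := le_trans (min_le_left _ _) (min_le_right _ _)
        linarith
    _ = rv := by ring
  have hw2W : w2 ∈ Ws f (f^[i] p) := by
    rw [hw2T]
    exact ws_trans hyW hws
  have hw2B : w2 ∈ B := by rw [hw2]; exact iterB_mem hx0 hBeq hf hwB (m*n)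
  have hw2C : w2 ∈ C := by rw [hC]; exact subset_closure ⟨hw2W, hw2B⟩
  refine ⟨w2, ⟨w, ⟨hwU, hwC⟩, ?_⟩, hw2V, hw2C⟩
  rw [hw2, ← Function.iterate_mul]
end Mixing

end SD


lemma SD.closure_biUnion_finset {X : Type*} [TopologicalSpace X] {ι : Type*} (s : Finset ι)
    (g : ι → Set X) :
    closure (⋃ i ∈ s, g i) = ⋃ i ∈ s, closure (g i) := by
  classical
  induction s using Finset.induction with
  | empty => simp
  | insert a s h ih =>
    rw [Finset.set_biUnion_insert, closure_union, ih, Finset.set_biUnion_insert]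

/-- Decomposition of a basic set into pieces cyclically permuted by `f`, on each of which `f^m`
is topologically mixing. Here `C i = closure (W^s(fⁱ(p)) ∩ B)`. -/
theorem basic_set_cyclic_decomposition {X : Type*} [MetricSpace X] [CompactSpace X]
    (f : X → X) (hf : Continuous f) (hsurj : Function.Surjective f)
    (hexp : BiAsympCExpansive f) (hsh : Shadowing f)
    (B : Set X) (hB : IsBasicSet f B)
    (p : X) (hp : p ∈ Function.periodicPts f) (hpB : p ∈ B) :
    ∃ m : ℕ, 0 < m ∧
      (∀ i j, i < m → j < m → i ≠ j →
        Disjoint (closure (Ws f (f^[i] p) ∩ B)) (closure (Ws f (f^[j] p) ∩ B))) ∧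
      B = ⋃ i ∈ Finset.range m, closure (Ws f (f^[i] p) ∩ B) ∧
      (∀ i < m, f '' closure (Ws f (f^[i] p) ∩ B) = closure (Ws f (f^[i + 1] p) ∩ B)) ∧
      closure (Ws f (f^[m] p) ∩ B) = closure (Ws f p ∩ B) ∧
      (∀ i < m, f^[m] '' closure (Ws f (f^[i] p) ∩ B) = closure (Ws f (f^[i] p) ∩ B)) ∧
      (∀ i < m, TopMixingOn f^[m] (closure (Ws f (f^[i] p) ∩ B))) := by
  classical
  obtain ⟨c, hc, hexpw⟩ := hexp
  obtain ⟨x0, hx0, hBeq⟩ := hB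
  obtain ⟨k, hk0, hkp⟩ := hp
  have hk : f^[k] p = p := hkp
  haveI : NeZero k := ⟨hk0.ne'⟩
  have hex : ∃ n, 0 < n ∧ ((n : ℕ) : ZMod k) ∈ SD.GS f p k := ⟨k, hk0, SD.GS_k hk⟩
  set m := Nat.find hex with hm
  obtain ⟨hm0, hmGS⟩ := Nat.find_spec hex
  have hmin : ∀ n, n < m → ¬ (0 < n ∧ ((n:ℕ) : ZMod k) ∈ SD.GS f p k) :=
    fun n h => Nat.find_min hex h
  -- the key subset lemma, specialized
  have hCsub : ∀ (ρ : ZMod k), ρ ∈ SD.GS f p k → ∀ (b b' : ℕ),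
      (b : ZMod k) = (b' : ZMod k) + ρ →
      closure (Ws f (f^[b] p) ∩ B) ⊆ closure (Ws f (f^[b'] p) ∩ B) :=
    fun ρ hρ b b' hbb => SD.C_subset hf hsurj hc hexpw hsh hx0 hBeq hpB hk0 hk hρ hbb
  have hCeq : ∀ (b b' : ℕ), ((b : ZMod k) - (b' : ZMod k)) ∈ SD.GS f p k →
      closure (Ws f (f^[b] p) ∩ B) = closure (Ws f (f^[b'] p) ∩ B) := by
    intro b b' hd
    apply subset_antisymm
    · exact hCsub _ hd b b' (by ring)
    · exact hCsub _ (SD.GS_neg hk0 hd) b' b (by ring)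
  have himage : ∀ i : ℕ, f '' closure (Ws f (f^[i] p) ∩ B) = closure (Ws f (f^[i+1] p) ∩ B) :=
    fun i => SD.image_C hf hsurj hc hexpw hsh hx0 hBeq hpB hk0 hk i
  have hiterimage : ∀ (j i : ℕ),
      f^[j] '' closure (Ws f (f^[i] p) ∩ B) = closure (Ws f (f^[i+j] p) ∩ B) := by
    intro j
    induction j with
    | zero => intro i; simp
    | succ j ih =>
      intro i
      have h1 : f^[j+1] '' closure (Ws f (f^[i] p) ∩ B)
          = f '' (f^[j] '' closure (Ws f (f^[i] p) ∩ B)) := by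
        rw [← Set.image_comp, ← Function.iterate_succ' f j]
      rw [h1, ih i, himage (i + j), show i + j + 1 = i + (j+1) by omega]
  refine ⟨m, hm0, ?_, ?_, ?_, ?_, ?_, ?_⟩
  · -- disjointness
    have key : ∀ i j, i < j → j < m →
        Disjoint (closure (Ws f (f^[i] p) ∩ B)) (closure (Ws f (f^[j] p) ∩ B)) := by
      intro i j hij hjm
      rw [Set.disjoint_left]
      intro q hqi hqj
      have hphase := SD.inter_phase hf hx0 hBeq hpB hk0 hk hqi hqj
      have hcast : (((j - i : ℕ)) : ZMod k) = (j : ZMod k) - (i : ZMod k) := by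
        rw [Nat.cast_sub (le_of_lt hij)]
      have : 0 < j - i ∧ (((j - i : ℕ)) : ZMod k) ∈ SD.GS f p k := by
        refine ⟨by omega, ?_⟩
        rw [hcast]
        exact hphase
      exact hmin (j - i) (by omega) this
    intro i j him hjm hij
    rcases lt_or_gt_of_ne hij with h | h
    · exact key i j h hjm
    · exact (key j i h him).symm
  · -- union
    apply subset_antisymm
    · intro q hq
      have hcl : q ∈ closure (⋃ i ∈ Finset.range k, (Ws f (f^[i] p) ∩ B)) := by
        rw [Metric.mem_closure_iff]
        intro r hr
        obtain ⟨i, hik, v, hv, hd⟩ :=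
          SD.coverA hf hsurj hc hexpw hsh hx0 hBeq hpB hk0 hk hq hr
        exact ⟨v, Set.mem_biUnion (Finset.mem_range.2 hik) hv, hd⟩
      rw [SD.closure_biUnion_finset] at hcl
      obtain ⟨i, hi, hqi⟩ := Set.mem_iUnion₂.1 hcl
      rw [Finset.mem_range] at hi
      have heq : closure (Ws f (f^[i] p) ∩ B) = closure (Ws f (f^[i % m] p) ∩ B) := by
        apply hCeq
        have h1 : (((i : ℕ)) : ZMod k) - ((i % m : ℕ) : ZMod k)
            = ((i / m : ℕ) : ZMod k) * ((m : ℕ) : ZMod k) := by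
          have h2 : i % m + m * (i / m) = i := Nat.mod_add_div i m
          have h3 : ((i % m + m * (i / m) : ℕ) : ZMod k) = ((i : ℕ) : ZMod k) := by rw [h2]
          push_cast at h3
          linear_combination -h3
        rw [h1]
        exact SD.GS_nsmul hmGS (i / m)
      rw [heq] at hqi
      exact Set.mem_biUnion (Finset.mem_range.2 (Nat.mod_lt _ hm0)) hqi
    · intro q hq
      obtain ⟨i, hi, hqi⟩ := Set.mem_iUnion₂.1 hq
      have hBc : IsClosed B := SD.B_closed hx0 hBeq hf hpB
      exact ((closure_mono Set.inter_subset_right).trans hBc.closure_subset) hqi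
  · exact fun i _ => himage i
  · -- C_m = C_0
    have h0 : closure (Ws f (f^[m] p) ∩ B) = closure (Ws f (f^[0] p) ∩ B) := by
      apply hCeq
      simpa using hmGS
    rw [h0]
    simp
  · -- f^[m] invariance
    intro i _
    rw [hiterimage m i]
    apply hCeq
    have : ((i + m : ℕ) : ZMod k) - ((i : ℕ) : ZMod k) = ((m : ℕ) : ZMod k) := by
      push_cast; ring
    rw [this]
    exact hmGS
  · intro i _
    exact SD.mixing hf hsurj hc hexpw hsh hx0 hBeq hpB hk0 hk m hm0 hmGS i
end
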